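/- arXiv:2601.19722 — 5 statements merged into one kernel-verified Lean document; each statement's English description precedes it below -/
import Mathlib

section
/- Let U : ℝ^d → ℝ be differentiable, L-smooth (∇U is L-Lipschitz) and λ-strongly convex, with 0 < λ ≤ L, and let ν be a probability distribution on the Stiefel manifold 𝕍_m(ℝ^d) satisfying (d/m)·E_{V∼ν}[V Vᵀ] = I_d. Let 0 < γ ≤ m/(L d), and let P be the Markov kernel on ℝ^d which from state x moves to x − γ(d/m) V Vᵀ ∇U(x) + √(2γ) Z, where V ∼ ν and Z ∼ N_d(0, I_d) are independent. Then for every x, y ∈ ℝ^d, the order-2 Wasserstein distance W₂(δ_x P, δ_y P), defined as the square root of the infimum over all couplings ξ of δ_x P and δ_y P of ∫‖u − v‖² ξ(du, dv), satisfies W₂(δ_x P, δ_y P) ≤ (1 − γλ)^{1/2} ‖x − y‖ ≤ exp(−γλ/2) ‖x − y‖. -/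
open MeasureTheory ProbabilityTheory

noncomputable section

/-- The action of the matrix `V Vᵀ` on a vector `b`: `V Vᵀ b = ∑ i, ⟪V i, b⟫ • V i`. -/
def projDirs {d m : ℕ} (V : Fin m → EuclideanSpace ℝ (Fin d))
    (b : EuclideanSpace ℝ (Fin d)) : EuclideanSpace ℝ (Fin d) :=
  ∑ i, (inner ℝ (V i) b : ℝ) • V i

/-- The standard Gaussian measure `N_d(0, I_d)` on `ℝ^d` (Euclidean space). -/
def stdGaussian (d : ℕ) : Measure (EuclideanSpace ℝ (Fin d)) :=
  Measure.map (MeasurableEquiv.toLp 2 (Fin d → ℝ))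
    (Measure.pi fun _ : Fin d => gaussianReal 0 1)

/-- The order-2 Wasserstein distance, defined as the square root of the infimum over all
couplings `ξ` of `μ` and `η` of `∫ ‖u − v‖² ξ(du,dv)`. -/
def W2 {α : Type*} [NormedAddCommGroup α] [MeasurableSpace α] (μ η : Measure α) : ℝ :=
  Real.sqrt (sInf {c : ℝ | ∃ ξ : Measure (α × α),
    ξ.map Prod.fst = μ ∧ ξ.map Prod.snd = η ∧ c = ∫ p, ‖p.1 - p.2‖ ^ 2 ∂ξ})

open Set

local notation "E" d => EuclideanSpace ℝ (Fin d)

private lemma deriv_comparison {φ ψ φ' ψ' : ℝ → ℝ}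
    (hφ : ∀ t, HasDerivAt φ (φ' t) t) (hψ : ∀ t, HasDerivAt ψ (ψ' t) t)
    (h : ∀ t ∈ Set.Icc (0:ℝ) 1, φ' t ≤ ψ' t) : φ 1 - φ 0 ≤ ψ 1 - ψ 0 := by
  have hg : ∀ t, HasDerivAt (fun t => ψ t - φ t) (ψ' t - φ' t) t := fun t => (hψ t).sub (hφ t)
  have hmono : MonotoneOn (fun t => ψ t - φ t) (Set.Icc (0:ℝ) 1) := by
    apply monotoneOn_of_deriv_nonneg (convex_Icc 0 1)
    · exact fun t _ => ((hg t).differentiableAt).continuousAt.continuousWithinAt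
    · exact fun t _ => ((hg t).differentiableAt).differentiableWithinAt
    · intro t ht
      rw [interior_Icc] at ht
      rw [(hg t).deriv]
      have := h t ⟨ht.1.le, ht.2.le⟩
      linarith
  have := hmono (Set.left_mem_Icc.2 zero_le_one) (Set.right_mem_Icc.2 zero_le_one) zero_le_one
  dsimp at this; linarith

private lemma line_deriv {d : ℕ} {U : (E d) → ℝ} (hdiff : Differentiable ℝ U)
    (x w : E d) (t : ℝ) :
    HasDerivAt (fun t : ℝ => U (t • w + x)) ((inner ℝ (gradient U (t • w + x)) w : ℝ)) t := by
  have hl : HasDerivAt (fun s : ℝ => s • w + x) w t := by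
    simpa using ((hasDerivAt_id t).smul_const w).add_const x
  have hU := (hdiff (t • w + x)).hasGradientAt.hasFDerivAt
  simpa [InnerProductSpace.toDual_apply_apply, Function.comp_def] using hU.comp_hasDerivAt t hl

private lemma descent {d : ℕ} {U : (E d) → ℝ} {L : ℝ} (hdiff : Differentiable ℝ U)
    (hsmooth : ∀ a b, ‖gradient U a - gradient U b‖ ≤ L * ‖a - b‖) (x y : E d) :
    U y ≤ U x + (inner ℝ (gradient U x) (y - x) : ℝ) + L / 2 * ‖y - x‖ ^ 2 := by
  set w := y - x with hw
  have hψ : ∀ t : ℝ, HasDerivAt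
      (fun t : ℝ => L / 2 * ‖w‖ ^ 2 * t ^ 2 + (inner ℝ (gradient U x) w : ℝ) * t)
      (L * ‖w‖ ^ 2 * t + (inner ℝ (gradient U x) w : ℝ)) t := by
    intro t
    have h1 := ((hasDerivAt_pow 2 t).const_mul (L / 2 * ‖w‖ ^ 2)).add
      ((hasDerivAt_id t).const_mul (inner ℝ (gradient U x) w : ℝ))
    exact h1.congr_deriv (by push_cast; ring)
  have hcmp := deriv_comparison (line_deriv hdiff x w) hψ ?_
  · have e0 : ((0:ℝ) • w + x) = x := by simp
    have e1 : ((1:ℝ) • w + x) = y := by simp [hw]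
    rw [e0, e1] at hcmp
    ring_nf at hcmp ⊢
    linarith
  · intro t ht
    have hkey : (inner ℝ (gradient U (t • w + x)) w : ℝ) - (inner ℝ (gradient U x) w : ℝ)
        ≤ L * ‖w‖ ^ 2 * t := by
      have h1 : (inner ℝ (gradient U (t • w + x)) w : ℝ) - (inner ℝ (gradient U x) w : ℝ)
          = (inner ℝ (gradient U (t • w + x) - gradient U x) w : ℝ) := by
        rw [inner_sub_left]
      rw [h1]
      calc (inner ℝ (gradient U (t • w + x) - gradient U x) w : ℝ)
          ≤ ‖gradient U (t • w + x) - gradient U x‖ * ‖w‖ := real_inner_le_norm _ _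
        _ ≤ (L * ‖(t • w + x) - x‖) * ‖w‖ := by
            apply mul_le_mul_of_nonneg_right (hsmooth _ _) (norm_nonneg _)
        _ = L * ‖w‖ ^ 2 * t := by
            rw [add_sub_cancel_right, norm_smul, Real.norm_eq_abs, abs_of_nonneg ht.1]
            ring
    linarith

private lemma line_convexOn {d : ℕ} {f : (E d) → ℝ} (hconv : ConvexOn ℝ Set.univ f)
    (x y : E d) : ConvexOn ℝ Set.univ (fun t : ℝ => f (t • (y - x) + x)) := by
  have h := hconv.comp_affineMap (AffineMap.lineMap x y)
  have he : (fun t : ℝ => f (t • (y - x) + x)) = f ∘ (AffineMap.lineMap x y) := by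
    funext t
    simp [AffineMap.lineMap_apply, Function.comp]
  rw [he]
  simpa using h

private lemma subgrad {d : ℕ} {U : (E d) → ℝ} (hdiff : Differentiable ℝ U)
    (hconv : ConvexOn ℝ Set.univ U) (x y : E d) :
    (inner ℝ (gradient U x) (y - x) : ℝ) ≤ U y - U x := by
  have hφconv := line_convexOn hconv x y
  have hd := line_deriv hdiff x (y - x)
  have h := hφconv.le_slope_of_hasDerivAt (Set.mem_univ (0:ℝ)) (Set.mem_univ 1) zero_lt_one (hd 0)
  rw [slope_def_field] at h
  simpa using h

private lemma halfstep {d : ℕ} {U : (E d) → ℝ} {L : ℝ} (hdiff : Differentiable ℝ U)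
    (hconv : ConvexOn ℝ Set.univ U)
    (hsmooth : ∀ a b, ‖gradient U a - gradient U b‖ ≤ L * ‖a - b‖) (hL : 0 < L) (a b : E d) :
    U a + (inner ℝ (gradient U a) (b - a) : ℝ) + 1 / (2 * L) * ‖gradient U b - gradient U a‖ ^ 2
      ≤ U b := by
  set g := gradient U b - gradient U a with hg
  set z := b - L⁻¹ • g with hz
  have h1 := subgrad hdiff hconv a z
  have h2 := descent hdiff hsmooth b z
  have hzb : z - b = -(L⁻¹ • g) := by rw [hz]; abel
  have hza : z - a = (b - a) - L⁻¹ • g := by rw [hz]; abel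
  have e2 : (inner ℝ (gradient U b) (z - b) : ℝ) = -(L⁻¹ * (inner ℝ (gradient U b) g : ℝ)) := by
    rw [hzb, inner_neg_right, real_inner_smul_right]
  have e3 : ‖z - b‖ ^ 2 = L⁻¹ ^ 2 * ‖g‖ ^ 2 := by
    rw [hzb, norm_neg, norm_smul, Real.norm_eq_abs, abs_of_nonneg (by positivity : (0:ℝ) ≤ L⁻¹),
      mul_pow]
  have e1 : (inner ℝ (gradient U a) (z - a) : ℝ)
      = (inner ℝ (gradient U a) (b - a) : ℝ) - L⁻¹ * (inner ℝ (gradient U a) g : ℝ) := by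
    rw [hza, inner_sub_right, real_inner_smul_right]
  have e4 : (inner ℝ (gradient U b) g : ℝ) - (inner ℝ (gradient U a) g : ℝ) = ‖g‖ ^ 2 := by
    rw [← inner_sub_left, ← hg, real_inner_self_eq_norm_sq]
  rw [e2, e3] at h2
  rw [e1] at h1
  have hLinv : L⁻¹ = 1 / L := by rw [one_div]
  have hfrac : L / 2 * (L⁻¹ ^ 2 * ‖g‖ ^ 2) = 1 / (2 * L) * ‖g‖ ^ 2 := by
    field_simp
  have hmul : L⁻¹ * (inner ℝ (gradient U b) g : ℝ) - L⁻¹ * (inner ℝ (gradient U a) g : ℝ)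
      = L⁻¹ * ‖g‖ ^ 2 := by rw [← mul_sub, e4]
  have hhalf : L⁻¹ * ‖g‖ ^ 2 = 2 * (1 / (2 * L) * ‖g‖ ^ 2) := by
    field_simp
  linarith [h1, h2, hmul, hhalf, hfrac]

private lemma cocoercive {d : ℕ} {U : (E d) → ℝ} {L : ℝ} (hdiff : Differentiable ℝ U)
    (hconv : ConvexOn ℝ Set.univ U)
    (hsmooth : ∀ a b, ‖gradient U a - gradient U b‖ ≤ L * ‖a - b‖) (hL : 0 < L) (x y : E d) :
    ‖gradient U x - gradient U y‖ ^ 2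
      ≤ L * (inner ℝ (gradient U x - gradient U y) (x - y) : ℝ) := by
  have h1 := halfstep hdiff hconv hsmooth hL x y
  have h2 := halfstep hdiff hconv hsmooth hL y x
  have hsym : ‖gradient U x - gradient U y‖ = ‖gradient U y - gradient U x‖ := norm_sub_rev _ _
  have ea : (inner ℝ (gradient U x - gradient U y) (x - y) : ℝ)
      = (inner ℝ (gradient U x) (x - y) : ℝ) - (inner ℝ (gradient U y) (x - y) : ℝ) := by
    rw [inner_sub_left]
  have eb : (inner ℝ (gradient U x) (y - x) : ℝ) = -(inner ℝ (gradient U x) (x - y) : ℝ) := by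
    rw [← inner_neg_right]; congr 1; abel
  have ec : (inner ℝ (gradient U y) (x - y) : ℝ) = (inner ℝ (gradient U y) (x - y) : ℝ) := rfl
  have hnn : ‖gradient U x - gradient U y‖ ^ 2 = ‖gradient U y - gradient U x‖ ^ 2 := by
    rw [hsym]
  rw [eb] at h1
  rw [hnn] at h2
  have h5 : 2 * (1 / (2 * L) * ‖gradient U y - gradient U x‖ ^ 2)
      ≤ (inner ℝ (gradient U x) (x - y) : ℝ) - (inner ℝ (gradient U y) (x - y) : ℝ) := by
    linarith [h1, h2, hnn]
  have h6 := mul_le_mul_of_nonneg_left h5 hL.le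
  have h7 : L * (2 * (1 / (2 * L) * ‖gradient U y - gradient U x‖ ^ 2))
      = ‖gradient U y - gradient U x‖ ^ 2 := by
    field_simp
  rw [h7] at h6
  rw [ea, hnn]
  linarith [h6]

private lemma quad_deriv {d : ℕ} (lam : ℝ) (x w : E d) (t : ℝ) :
    HasDerivAt (fun t : ℝ => lam / 2 * ‖t • w + x‖ ^ 2)
      (lam / 2 * (2 * t * ‖w‖ ^ 2 + 2 * (inner ℝ w x : ℝ))) t := by
  have he : (fun t : ℝ => lam / 2 * ‖t • w + x‖ ^ 2)
      = fun t : ℝ => lam / 2 * (t ^ 2 * ‖w‖ ^ 2 + 2 * (t * (inner ℝ w x : ℝ)) + ‖x‖ ^ 2) := by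
    funext t
    rw [norm_add_sq_real]
    congr 1
    rw [norm_smul, real_inner_smul_left, mul_pow, Real.norm_eq_abs, sq_abs]
    
  rw [he]
  have h1 := (((hasDerivAt_pow 2 t).mul_const (‖w‖ ^ 2)).add
      (((hasDerivAt_id t).mul_const (inner ℝ w x : ℝ)).const_mul 2)).add_const (‖x‖ ^ 2)
  have h2 : HasDerivAt (fun t : ℝ => t ^ 2 * ‖w‖ ^ 2 + 2 * (t * (inner ℝ w x : ℝ)) + ‖x‖ ^ 2)
      (2 * t * ‖w‖ ^ 2 + 2 * (inner ℝ w x : ℝ)) t := by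
    exact h1.congr_deriv (by push_cast; ring)
  exact h2.const_mul _

private lemma strong_mono {d : ℕ} {U : (E d) → ℝ} {lam : ℝ} (hdiff : Differentiable ℝ U)
    (hconv : ConvexOn ℝ Set.univ (fun x => U x - lam / 2 * ‖x‖ ^ 2)) (x y : E d) :
    lam * ‖y - x‖ ^ 2 ≤ (inner ℝ (gradient U y - gradient U x) (y - x) : ℝ) := by
  set w := y - x with hw
  -- line restriction of the convex part
  have hline : HasDerivAt (fun s : ℝ => s • w + x) w 0 := by
    simpa using ((hasDerivAt_id (0:ℝ)).smul_const w).add_const x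
  have hψd : ∀ t : ℝ, HasDerivAt (fun t : ℝ => U (t • w + x) - lam / 2 * ‖t • w + x‖ ^ 2)
      ((inner ℝ (gradient U (t • w + x)) w : ℝ)
        - lam / 2 * (2 * t * ‖w‖ ^ 2 + 2 * (inner ℝ w x : ℝ))) t := by
    intro t
    have h1 : HasDerivAt (fun t : ℝ => U (t • w + x))
        ((inner ℝ (gradient U (t • w + x)) w : ℝ)) t := by
      have hl : HasDerivAt (fun s : ℝ => s • w + x) w t := by
        simpa using ((hasDerivAt_id t).smul_const w).add_const x
      have hU := (hdiff (t • w + x)).hasGradientAt.hasFDerivAt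
      simpa [InnerProductSpace.toDual_apply_apply, Function.comp_def] using hU.comp_hasDerivAt t hl
    exact h1.sub (quad_deriv lam x w t)
  have hψconv : ConvexOn ℝ Set.univ
      (fun t : ℝ => U (t • w + x) - lam / 2 * ‖t • w + x‖ ^ 2) := by
    have h := hconv.comp_affineMap (AffineMap.lineMap x y)
    have he : (fun t : ℝ => U (t • w + x) - lam / 2 * ‖t • w + x‖ ^ 2)
        = (fun z => U z - lam / 2 * ‖z‖ ^ 2) ∘ (AffineMap.lineMap x y) := by
      funext t
      simp [AffineMap.lineMap_apply, Function.comp, hw]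
    rw [he]
    simpa using h
  have h0 := hψconv.le_slope_of_hasDerivAt (Set.mem_univ (0:ℝ)) (Set.mem_univ 1)
    zero_lt_one (hψd 0)
  have h1 := hψconv.slope_le_of_hasDerivAt (Set.mem_univ (0:ℝ)) (Set.mem_univ 1)
    zero_lt_one (hψd 1)
  have hchain := h0.trans h1
  have e0 : ((0:ℝ) • w + x) = x := by simp
  have e1 : ((1:ℝ) • w + x) = y := by simp [hw]
  rw [e0, e1] at hchain
  have hexp : (inner ℝ (gradient U y - gradient U x) w : ℝ)
      = (inner ℝ (gradient U y) w : ℝ) - (inner ℝ (gradient U x) w : ℝ) := by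
    rw [inner_sub_left]
  rw [hw] at *
  linarith [hchain]

private lemma projDirs_continuous {d m : ℕ} (b : EuclideanSpace ℝ (Fin d)) :
    Continuous fun V : Fin m → EuclideanSpace ℝ (Fin d) => projDirs V b := by
  unfold projDirs
  exact continuous_finset_sum _ fun i _ => by
    fun_prop

private lemma projDirs_sub {d m : ℕ} (V : Fin m → EuclideanSpace ℝ (Fin d))
    (a b : EuclideanSpace ℝ (Fin d)) :
    projDirs V a - projDirs V b = projDirs V (a - b) := by
  simp [projDirs, inner_sub_right, sub_smul, Finset.sum_sub_distrib]

private lemma projDirs_inner_self {d m : ℕ} {V : Fin m → EuclideanSpace ℝ (Fin d)}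
    (hV : Orthonormal ℝ V) (g : EuclideanSpace ℝ (Fin d)) :
    (inner ℝ (projDirs V g) g : ℝ) = ‖projDirs V g‖ ^ 2 := by
  have h1 : (inner ℝ (projDirs V g) (projDirs V g) : ℝ)
      = ∑ i, (inner ℝ (V i) g : ℝ) ^ 2 := by
    unfold projDirs
    rw [sum_inner]
    refine Finset.sum_congr rfl fun i _ => ?_
    rw [real_inner_smul_left, hV.inner_right_fintype]
    ring
  have h2 : (inner ℝ (projDirs V g) g : ℝ) = ∑ i, (inner ℝ (V i) g : ℝ) ^ 2 := by
    unfold projDirs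
    rw [sum_inner]
    refine Finset.sum_congr rfl fun i _ => ?_
    rw [real_inner_smul_left]
    ring
  rw [h2, ← h1, real_inner_self_eq_norm_sq]

private lemma projDirs_norm_le {d m : ℕ} {V : Fin m → EuclideanSpace ℝ (Fin d)}
    (hV : Orthonormal ℝ V) (g : EuclideanSpace ℝ (Fin d)) :
    ‖projDirs V g‖ ≤ ‖g‖ := by
  have h := projDirs_inner_self hV g
  have hcs := real_inner_le_norm (projDirs V g) g
  nlinarith [norm_nonneg (projDirs V g), norm_nonneg g]

private lemma stdGaussian_isProb (d : ℕ) : IsProbabilityMeasure (stdGaussian d) :=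
  Measure.isProbabilityMeasure_map (MeasurableEquiv.measurable _).aemeasurable

set_option maxHeartbeats 2000000 in
/-- Wasserstein contraction of the zeroth-order unadjusted Langevin kernel. -/
theorem sula_wasserstein_contraction
    (d m : ℕ) (hm : 1 ≤ m) (hmd : m ≤ d)
    (U : EuclideanSpace ℝ (Fin d) → ℝ) (L lam : ℝ)
    (hlam : 0 < lam) (hlamL : lam ≤ L)
    (hdiff : Differentiable ℝ U)
    (hsmooth : ∀ x y, ‖gradient U x - gradient U y‖ ≤ L * ‖x - y‖)
    (hconv : ConvexOn ℝ Set.univ (fun x => U x - lam / 2 * ‖x‖ ^ 2))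
    (ν : Measure (Fin m → EuclideanSpace ℝ (Fin d))) [IsProbabilityMeasure ν]
    (hstiefel : ∀ᵐ V ∂ν, Orthonormal ℝ V)
    (hmean : ∀ b : EuclideanSpace ℝ (Fin d),
      ∫ V, projDirs V b ∂ν = ((m : ℝ) / d) • b)
    (γ : ℝ) (hγ : 0 < γ) (hγ' : γ ≤ m / (L * d))
    (x y : EuclideanSpace ℝ (Fin d)) :
    let kernel : EuclideanSpace ℝ (Fin d) → Measure (EuclideanSpace ℝ (Fin d)) :=
      fun z => Measure.map
        (fun p : (Fin m → EuclideanSpace ℝ (Fin d)) × EuclideanSpace ℝ (Fin d) =>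
          z - (γ * ((d : ℝ) / m)) • projDirs p.1 (gradient U z)
            + Real.sqrt (2 * γ) • p.2)
        (ν.prod (stdGaussian d))
    W2 (kernel x) (kernel y) ≤ Real.sqrt (1 - γ * lam) * ‖x - y‖ ∧
      Real.sqrt (1 - γ * lam) * ‖x - y‖ ≤ Real.exp (-(γ * lam) / 2) * ‖x - y‖ := by
  intro kernel
  have hd0 : 0 < d := le_trans hm hmd
  have hmR : (0:ℝ) < m := by exact_mod_cast hm
  have hdR : (0:ℝ) < d := by exact_mod_cast hd0
  have hL : 0 < L := lt_of_lt_of_le hlam hlamL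
  haveI : IsProbabilityMeasure (stdGaussian d) := stdGaussian_isProb d
  set c : ℝ := γ * ((d : ℝ) / m) with hc
  set s : ℝ := Real.sqrt (2 * γ) with hs
  set w : EuclideanSpace ℝ (Fin d) := x - y with hw
  set g : EuclideanSpace ℝ (Fin d) := gradient U x - gradient U y with hg
  set μ := ν.prod (stdGaussian d) with hμ
  -- scalar facts
  have hc0 : 0 < c := by positivity
  have hcL : c * L ≤ 1 := by
    have h1 : γ * (L * d) ≤ m := (le_div_iff₀ (by positivity)).mp hγ'
    have h2 : c * L = γ * (L * d) / m := by rw [hc]; field_simp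
    rw [h2, div_le_one hmR]
    exact h1
  have hγlam : γ * lam ≤ 1 := by
    have hdm : (1:ℝ) ≤ (d:ℝ) / m := (one_le_div hmR).mpr (by exact_mod_cast hmd)
    have : γ * lam ≤ c * L := by
      rw [hc]
      have h1 : γ * lam ≤ γ * L := mul_le_mul_of_nonneg_left hlamL hγ.le
      have h2 : γ * L ≤ γ * ((d:ℝ)/m) * L := by
        nlinarith [mul_nonneg (mul_nonneg hγ.le hL.le) (sub_nonneg.mpr hdm)]
      linarith
    linarith
  have h1γ : 0 ≤ 1 - γ * lam := by linarith
  -- analytic inequalities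
  have hA : lam * ‖w‖ ^ 2 ≤ (inner ℝ g w : ℝ) := by
    have := strong_mono hdiff hconv y x
    simpa [← hw, ← hg] using this
  have hUconv : ConvexOn ℝ Set.univ U := by
    have hq : ConvexOn ℝ Set.univ (fun z : EuclideanSpace ℝ (Fin d) => lam / 2 * ‖z‖ ^ 2) := by
      refine ⟨convex_univ, fun a _ b _ p q hp hq hpq => ?_⟩
      have h1 : ‖p • a + q • b‖ ≤ p * ‖a‖ + q * ‖b‖ := by
        refine (norm_add_le _ _).trans ?_
        rw [norm_smul, norm_smul, Real.norm_eq_abs, Real.norm_eq_abs,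
          abs_of_nonneg hp, abs_of_nonneg hq]
      have h2 : ‖p • a + q • b‖ ^ 2 ≤ (p * ‖a‖ + q * ‖b‖) ^ 2 :=
        pow_le_pow_left₀ (norm_nonneg _) h1 2
      have h3 : (p * ‖a‖ + q * ‖b‖) ^ 2 ≤ p * ‖a‖ ^ 2 + q * ‖b‖ ^ 2 := by
        nlinarith [mul_nonneg (mul_nonneg hp hq) (sq_nonneg (‖a‖ - ‖b‖))]
      have h4 := mul_le_mul_of_nonneg_left (h2.trans h3) (by linarith : (0:ℝ) ≤ lam / 2)
      simp only [smul_eq_mul]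
      linarith [h4]
    have he : U = fun z => (U z - lam / 2 * ‖z‖ ^ 2) + lam / 2 * ‖z‖ ^ 2 := by
      funext z; ring
    rw [he]
    exact hconv.add hq
  have hgw0 : (0:ℝ) ≤ (inner ℝ g w : ℝ) := le_trans (by positivity) hA
  have hB : ‖g‖ ^ 2 ≤ L * (inner ℝ g w : ℝ) := by
    have := cocoercive hdiff hUconv hsmooth hL x y
    simpa [← hw, ← hg] using this
  -- the synchronous coupling
  set F : EuclideanSpace ℝ (Fin d) →
      ((Fin m → EuclideanSpace ℝ (Fin d)) × EuclideanSpace ℝ (Fin d)) →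
        EuclideanSpace ℝ (Fin d) :=
    fun z p => z - c • projDirs p.1 (gradient U z) + s • p.2 with hF
  have hFc : ∀ z, Continuous (F z) := fun z =>
    (continuous_const.sub
      (((projDirs_continuous (gradient U z)).comp continuous_fst).const_smul c)).add
      (continuous_snd.const_smul s)
  set Φ := fun p => (F x p, F y p) with hΦdef
  have hΦ : Measurable Φ := ((hFc x).prodMk (hFc y)).measurable
  set ξ := μ.map Φ with hξ
  have hker : ∀ z, kernel z = μ.map (F z) := fun z => rfl
  have hfst : ξ.map Prod.fst = kernel x := by
    rw [hξ, Measure.map_map measurable_fst hΦ, hker]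
    rfl
  have hsnd : ξ.map Prod.snd = kernel y := by
    rw [hξ, Measure.map_map measurable_snd hΦ, hker]
    rfl
  -- transfer the integral to ν
  have hmeas2 : AEStronglyMeasurable
      (fun p : EuclideanSpace ℝ (Fin d) × EuclideanSpace ℝ (Fin d) => ‖p.1 - p.2‖ ^ 2) ξ :=
    ((continuous_fst.sub continuous_snd).norm.pow 2).aestronglyMeasurable
  have hpt : ∀ p, F x p - F y p = w - c • projDirs p.1 g := by
    intro p
    have h := projDirs_sub p.1 (gradient U x) (gradient U y)
    rw [← hg] at h
    show (x - c • projDirs p.1 (gradient U x) + s • p.2)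
        - (y - c • projDirs p.1 (gradient U y) + s • p.2) = w - c • projDirs p.1 g
    rw [hw, ← h, smul_sub]
    abel
  have hI1 : ∫ p, ‖p.1 - p.2‖ ^ 2 ∂ξ = ∫ p, ‖w - c • projDirs p.1 g‖ ^ 2 ∂μ := by
    rw [hξ, integral_map hΦ.aemeasurable hmeas2]
    refine integral_congr_ae (Filter.Eventually.of_forall fun p => ?_)
    simp only [hΦdef]
    rw [hpt p]
  have hmap : μ.map Prod.fst = ν := by
    rw [hμ, Measure.map_fst_prod]
    simp
  have hmeas3 : AEStronglyMeasurable
      (fun V : Fin m → EuclideanSpace ℝ (Fin d) => ‖w - c • projDirs V g‖ ^ 2)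
      (μ.map Prod.fst) :=
    ((continuous_const.sub ((projDirs_continuous g).const_smul c)).norm.pow 2).aestronglyMeasurable
  have hI2 : ∫ p, ‖w - c • projDirs p.1 g‖ ^ 2 ∂μ
      = ∫ V, ‖w - c • projDirs V g‖ ^ 2 ∂ν := by
    rw [← hmap, integral_map measurable_fst.aemeasurable hmeas3]
  -- compute the ν-integral
  have hPc : Continuous fun V : Fin m → EuclideanSpace ℝ (Fin d) => projDirs V g :=
    projDirs_continuous g
  have hbound : ∀ᵐ V ∂ν, ‖projDirs V g‖ ≤ ‖g‖ :=
    hstiefel.mono fun V hV => projDirs_norm_le hV g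
  have hintPV : Integrable (fun V => projDirs V g) ν :=
    Integrable.mono' (integrable_const ‖g‖) hPc.aestronglyMeasurable hbound
  have hmeanPV : ∫ V, projDirs V g ∂ν = ((m : ℝ) / d) • g := hmean g
  have i1int : Integrable (fun V => (inner ℝ w (projDirs V g) : ℝ)) ν := by
    refine Integrable.mono' (integrable_const (‖w‖ * ‖g‖))
      ((continuous_const.inner hPc).aestronglyMeasurable) ?_
    filter_upwards [hbound] with V hV
    rw [Real.norm_eq_abs]
    exact (abs_real_inner_le_norm _ _).trans (mul_le_mul_of_nonneg_left hV (norm_nonneg w))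
  have i1 : ∫ V, (inner ℝ w (projDirs V g) : ℝ) ∂ν = ((m : ℝ) / d) * (inner ℝ w g : ℝ) := by
    rw [integral_inner hintPV, hmeanPV, real_inner_smul_right]
  have i2int : Integrable (fun V => ‖projDirs V g‖ ^ 2) ν := by
    refine Integrable.mono' (integrable_const (‖g‖ ^ 2))
      ((hPc.norm.pow 2).aestronglyMeasurable) ?_
    filter_upwards [hbound] with V hV
    rw [Real.norm_eq_abs, abs_of_nonneg (by positivity)]
    exact pow_le_pow_left₀ (norm_nonneg _) hV 2
  have i2 : ∫ V, ‖projDirs V g‖ ^ 2 ∂ν = ((m : ℝ) / d) * ‖g‖ ^ 2 := by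
    have he : (fun V => ‖projDirs V g‖ ^ 2) =ᵐ[ν] fun V => (inner ℝ g (projDirs V g) : ℝ) := by
      filter_upwards [hstiefel] with V hV
      rw [real_inner_comm, projDirs_inner_self hV]
    rw [integral_congr_ae he, integral_inner hintPV, hmeanPV, real_inner_smul_right,
      real_inner_self_eq_norm_sq]
  have hHexp : ∀ V : Fin m → EuclideanSpace ℝ (Fin d),
      ‖w - c • projDirs V g‖ ^ 2
        = ‖w‖ ^ 2 - (2 * c) * (inner ℝ w (projDirs V g) : ℝ) + c ^ 2 * ‖projDirs V g‖ ^ 2 := by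
    intro V
    rw [norm_sub_sq_real, real_inner_smul_right, norm_smul, Real.norm_eq_abs, mul_pow, sq_abs]
    ring
  have Ival : ∫ V, ‖w - c • projDirs V g‖ ^ 2 ∂ν
      = ‖w‖ ^ 2 - (2 * c) * (((m : ℝ) / d) * (inner ℝ w g : ℝ))
        + c ^ 2 * (((m : ℝ) / d) * ‖g‖ ^ 2) := by
    simp_rw [hHexp]
    have ic : Integrable (fun V => (2 * c) * (inner ℝ w (projDirs V g) : ℝ)) ν :=
      i1int.const_mul _
    have ia : Integrable
        (fun V => ‖w‖ ^ 2 - (2 * c) * (inner ℝ w (projDirs V g) : ℝ)) ν :=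
      (integrable_const _).sub ic
    have ib : Integrable (fun V => c ^ 2 * ‖projDirs V g‖ ^ 2) ν := i2int.const_mul _
    rw [integral_add ia ib, integral_sub (integrable_const _) ic,
      integral_const_mul, integral_const_mul, i1, i2, integral_const]
    simp [measure_univ]
  -- the key bound
  have hfin : ∫ p, ‖p.1 - p.2‖ ^ 2 ∂ξ ≤ (1 - γ * lam) * ‖w‖ ^ 2 := by
    rw [hI1, hI2, Ival]
    have hcm : c * ((m : ℝ) / d) = γ := by
      rw [hc]
      field_simp
    have hwg : (inner ℝ w g : ℝ) = (inner ℝ g w : ℝ) := real_inner_comm _ _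
    rw [hwg]
    have e1 : (2 * c) * (((m : ℝ) / d) * (inner ℝ g w : ℝ)) = 2 * γ * (inner ℝ g w : ℝ) := by
      rw [← hcm]; ring
    have e2 : c ^ 2 * (((m : ℝ) / d) * ‖g‖ ^ 2) = (γ * c) * ‖g‖ ^ 2 := by
      rw [← hcm]; ring
    rw [e1, e2]
    have h6 : (γ * c) * ‖g‖ ^ 2 ≤ (γ * c) * (L * (inner ℝ g w : ℝ)) :=
      mul_le_mul_of_nonneg_left hB (by positivity)
    have h7 : (γ * c) * (L * (inner ℝ g w : ℝ)) = γ * ((c * L) * (inner ℝ g w : ℝ)) := by ring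
    have h8 : (c * L) * (inner ℝ g w : ℝ) ≤ 1 * (inner ℝ g w : ℝ) :=
      mul_le_mul_of_nonneg_right hcL hgw0
    have h9 := mul_le_mul_of_nonneg_left h8 hγ.le
    rw [h7] at h6
    have h10 := mul_le_mul_of_nonneg_left hA hγ.le
    nlinarith [h6, h9, h10]
  -- conclude
  have hW : W2 (kernel x) (kernel y) ≤ Real.sqrt ((1 - γ * lam) * ‖w‖ ^ 2) := by
    unfold W2
    apply Real.sqrt_le_sqrt
    refine le_trans (csInf_le ⟨0, ?_⟩ ⟨ξ, hfst, hsnd, rfl⟩) hfin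
    rintro c' ⟨ξ', -, -, rfl⟩
    exact integral_nonneg fun p => by positivity
  constructor
  · refine hW.trans (le_of_eq ?_)
    rw [Real.sqrt_mul h1γ, Real.sqrt_sq (norm_nonneg _)]
  · apply mul_le_mul_of_nonneg_right _ (norm_nonneg _)
    have h11 : 1 - γ * lam ≤ Real.exp (-(γ * lam)) := by
      linarith [Real.add_one_le_exp (-(γ * lam))]
    calc Real.sqrt (1 - γ * lam) ≤ Real.sqrt (Real.exp (-(γ * lam))) := Real.sqrt_le_sqrt h11
      _ = Real.exp (-(γ * lam) / 2) := by
          rw [show Real.exp (-(γ * lam)) = (Real.exp (-(γ * lam) / 2)) ^ 2 by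
            rw [sq, ← Real.exp_add]; ring_nf]
          exact Real.sqrt_sq (Real.exp_pos _).le
end
end

section
/- Let U : ℝ^d → ℝ be differentiable, L-smooth and λ-strongly convex with 0 < λ ≤ L, and let ν be a probability distribution on the Stiefel manifold 𝕍_m(ℝ^d) satisfying (d/m)·E_{V∼ν}[V Vᵀ] = I_d. Then for every x, y ∈ ℝ^d and every step size 0 < γ ≤ m/(L d), ∫ ‖(x − y) − γ(d/m) V Vᵀ (∇U(x) − ∇U(y))‖² ν(dV) ≤ (1 − γλ) ‖x − y‖². -/
open MeasureTheory

noncomputable section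

section Aux

variable {E : Type*} [NormedAddCommGroup E] [InnerProductSpace ℝ E] [CompleteSpace E]

lemma line_hasDerivAt {f : E → ℝ} {g : E → E} (hg : ∀ p, HasGradientAt f (g p) p)
    (x v : E) (t : ℝ) :
    HasDerivAt (fun s : ℝ => f (s • v + x)) (inner ℝ (g (t • v + x)) v : ℝ) t := by
  have hc : HasDerivAt (fun s : ℝ => s • v + x) v t := by
    simpa using ((hasDerivAt_id t).smul_const v).add_const x
  have h2 := ((hg (t • v + x)).hasFDerivAt).comp_hasDerivAt t hc
  simpa [Function.comp_def, InnerProductSpace.toDual_apply_apply] using h2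

lemma convex_first_order {f : E → ℝ} {g : E → E} (hg : ∀ p, HasGradientAt f (g p) p)
    (hf : ConvexOn ℝ Set.univ f) (x y : E) :
    f x + (inner ℝ (g x) (y - x) : ℝ) ≤ f y := by
  set v := y - x with hv
  have hφconv : ConvexOn ℝ Set.univ (fun t : ℝ => f (t • v + x)) := by
    have h := hf.comp_affineMap (AffineMap.lineMap x y)
    simp only [Set.preimage_univ] at h
    have hfun : (f ∘ (AffineMap.lineMap x y : ℝ →ᵃ[ℝ] E)) = fun t : ℝ => f (t • v + x) := by
      funext t
      simp [AffineMap.lineMap_apply, hv]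
    rwa [hfun] at h
  have hd := line_hasDerivAt hg x v 0
  simp only [zero_smul, zero_add] at hd
  have hs := hφconv.le_slope_of_hasDerivAt (Set.mem_univ (0 : ℝ)) (Set.mem_univ (1 : ℝ))
    zero_lt_one hd
  rw [slope_def_field] at hs
  have e1 : (1 : ℝ) • v + x = y := by simp [hv]
  have e0 : (0 : ℝ) • v + x = x := by simp
  rw [e0, e1] at hs
  have : (inner ℝ (g x) v : ℝ) ≤ f y - f x := by
    simpa using hs
  linarith

lemma descent_lemma {f : E → ℝ} {g : E → E} {L : ℝ} (hL : 0 < L)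
    (hg : ∀ p, HasGradientAt f (g p) p)
    (hlip : ∀ a b, ‖g a - g b‖ ≤ L * ‖a - b‖) (x y : E) :
    f y ≤ f x + (inner ℝ (g x) (y - x) : ℝ) + L / 2 * ‖y - x‖ ^ 2 := by
  set v := y - x with hv
  have hgcont : Continuous g := by
    refine (LipschitzWith.of_dist_le_mul (K := L.toNNReal) ?_).continuous
    intro a b
    rw [dist_eq_norm, dist_eq_norm, Real.coe_toNNReal _ hL.le]
    exact hlip a b
  have hφ'cont : Continuous (fun t : ℝ => (inner ℝ (g (t • v + x)) v : ℝ)) := by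
    exact Continuous.inner (hgcont.comp (by continuity)) continuous_const
  have hftc : ∫ t in (0:ℝ)..1, (inner ℝ (g (t • v + x)) v : ℝ)
      = f ((1:ℝ) • v + x) - f ((0:ℝ) • v + x) :=
    intervalIntegral.integral_eq_sub_of_hasDerivAt
      (fun t _ => line_hasDerivAt hg x v t) (hφ'cont.intervalIntegrable 0 1)
  have e1 : (1 : ℝ) • v + x = y := by simp [hv]
  have e0 : (0 : ℝ) • v + x = x := by simp
  rw [e0, e1] at hftc
  have hbound : ∫ t in (0:ℝ)..1, (inner ℝ (g (t • v + x)) v : ℝ)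
      ≤ ∫ t in (0:ℝ)..1, ((inner ℝ (g x) v : ℝ) + L * ‖v‖ ^ 2 * t) := by
    have hcont2 : Continuous (fun t : ℝ => (inner ℝ (g x) v : ℝ) + L * ‖v‖ ^ 2 * t) := by fun_prop
    refine intervalIntegral.integral_mono_on zero_le_one (hφ'cont.intervalIntegrable 0 1)
      (hcont2.intervalIntegrable 0 1) ?_
    intro t ht
    have h1 : (inner ℝ (g (t • v + x)) v : ℝ) - (inner ℝ (g x) v : ℝ)
        = (inner ℝ (g (t • v + x) - g x) v : ℝ) := by
      rw [inner_sub_left]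
    have h2 : (inner ℝ (g (t • v + x) - g x) v : ℝ) ≤ ‖g (t • v + x) - g x‖ * ‖v‖ :=
      real_inner_le_norm _ _
    have h3 : ‖g (t • v + x) - g x‖ ≤ L * (t * ‖v‖) := by
      calc ‖g (t • v + x) - g x‖ ≤ L * ‖t • v + x - x‖ := hlip _ _
        _ = L * (t * ‖v‖) := by
            rw [add_sub_cancel_right, norm_smul, Real.norm_eq_abs, abs_of_nonneg ht.1]
    nlinarith [mul_le_mul_of_nonneg_right h3 (norm_nonneg v)]
  have hval : ∫ t in (0:ℝ)..1, ((inner ℝ (g x) v : ℝ) + L * ‖v‖ ^ 2 * t)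
      = (inner ℝ (g x) v : ℝ) + L * ‖v‖ ^ 2 / 2 := by
    have hcont3 : Continuous (fun t : ℝ => L * ‖v‖ ^ 2 * t) := by fun_prop
    rw [intervalIntegral.integral_add (intervalIntegrable_const)
      (hcont3.intervalIntegrable 0 1),
      intervalIntegral.integral_const_mul, integral_id]
    simp
    ring
  rw [hval] at hbound
  rw [hftc] at hbound
  nlinarith [hbound]

lemma cocoercive_s1 {f : E → ℝ} {g : E → E} {L : ℝ} (hL : 0 < L)
    (hg : ∀ p, HasGradientAt f (g p) p)
    (hlip : ∀ a b, ‖g a - g b‖ ≤ L * ‖a - b‖)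
    (hfo : ∀ a b : E, f a + (inner ℝ (g a) (b - a) : ℝ) ≤ f b) (x y : E) :
    (1 / L) * ‖g x - g y‖ ^ 2 ≤ (inner ℝ (g x - g y) (x - y) : ℝ) := by
  have key : ∀ a b : E,
      f a + (inner ℝ (g a) (b - a) : ℝ) + 1 / (2 * L) * ‖g b - g a‖ ^ 2 ≤ f b := by
    intro a b
    set h := g b - g a with hh
    set z := b - (1 / L) • h with hz
    have h1 := hfo a z
    have h2 := descent_lemma hL hg hlip b z
    have e1 : (inner ℝ (g a) (z - a) : ℝ)
        = (inner ℝ (g a) (b - a) : ℝ) - (1 / L) * (inner ℝ (g a) h : ℝ) := by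
      have : z - a = (b - a) - (1 / L) • h := by rw [hz]; abel
      rw [this, inner_sub_right, real_inner_smul_right]
    have e2 : z - b = -((1 / L) • h) := by rw [hz]; abel
    have e3 : (inner ℝ (g b) (z - b) : ℝ) = -((1 / L) * (inner ℝ (g b) h : ℝ)) := by
      rw [e2, inner_neg_right, real_inner_smul_right]
    have e4 : ‖z - b‖ ^ 2 = (1 / L) ^ 2 * ‖h‖ ^ 2 := by
      rw [e2, norm_neg, norm_smul, mul_pow, Real.norm_eq_abs, sq_abs]
    have e5 : (inner ℝ (g b) h : ℝ) - (inner ℝ (g a) h : ℝ) = ‖h‖ ^ 2 := by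
      rw [← inner_sub_left, hh, real_inner_self_eq_norm_sq]
    rw [e1] at h1
    rw [e3, e4] at h2
    have hL' : L ≠ 0 := hL.ne'
    have expand : L / 2 * ((1 / L) ^ 2 * ‖h‖ ^ 2) = 1 / (2 * L) * ‖h‖ ^ 2 := by
      field_simp
    rw [expand] at h2
    have e6 : (1 / L) * (inner ℝ (g b) h : ℝ) - (1 / L) * (inner ℝ (g a) h : ℝ)
        = (1 / L) * ‖h‖ ^ 2 := by rw [← mul_sub, e5]
    have hfrac : (1 / L) * ‖h‖ ^ 2 - (1 / (2 * L)) * ‖h‖ ^ 2 = (1 / (2 * L)) * ‖h‖ ^ 2 := by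
      field_simp
      ring
    linarith [h1, h2, e6, hfrac]
  have k1 := key x y
  have k2 := key y x
  have e7 : (inner ℝ (g x) (y - x) : ℝ) = -(inner ℝ (g x) (x - y) : ℝ) := by
    rw [← inner_neg_right, neg_sub]
  have e8 : (inner ℝ (g y) (x - y) : ℝ) = (inner ℝ (g y) (x - y) : ℝ) := rfl
  have e9 : (inner ℝ (g x - g y) (x - y) : ℝ)
      = (inner ℝ (g x) (x - y) : ℝ) - (inner ℝ (g y) (x - y) : ℝ) := by rw [inner_sub_left]
  have e10 : ‖g y - g x‖ = ‖g x - g y‖ := norm_sub_rev _ _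
  rw [e7] at k1
  rw [e10] at k1
  have hsum : 1 / (2 * L) * ‖g x - g y‖ ^ 2 + 1 / (2 * L) * ‖g x - g y‖ ^ 2
      = (1 / L) * ‖g x - g y‖ ^ 2 := by
    field_simp
    ring
  linarith [k1, k2, e9, hsum]

end Aux

set_option maxHeartbeats 1000000 in
/-- one-step contraction estimate for the zeroth-order stochastic-gradient drift. -/
theorem sgrad_drift_contraction
    (d m : ℕ) (hm : 1 ≤ m) (hmd : m ≤ d)
    (U : EuclideanSpace ℝ (Fin d) → ℝ) (L lam : ℝ)
    (hlam : 0 < lam) (hlamL : lam ≤ L)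
    (hdiff : Differentiable ℝ U)
    (hsmooth : ∀ x y, ‖gradient U x - gradient U y‖ ≤ L * ‖x - y‖)
    (hconv : ConvexOn ℝ Set.univ (fun x => U x - lam / 2 * ‖x‖ ^ 2))
    (ν : Measure (Fin m → EuclideanSpace ℝ (Fin d))) [IsProbabilityMeasure ν]
    (hstiefel : ∀ᵐ V ∂ν, Orthonormal ℝ V)
    (hmean : ∀ b : EuclideanSpace ℝ (Fin d),
      ∫ V, projDirs V b ∂ν = ((m : ℝ) / d) • b)
    (x y : EuclideanSpace ℝ (Fin d)) (γ : ℝ) (hγ : 0 < γ) (hγ' : γ ≤ m / (L * d)) :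
    ∫ V, ‖(x - y) - (γ * ((d : ℝ) / m)) • projDirs V (gradient U x - gradient U y)‖ ^ 2 ∂ν
      ≤ (1 - γ * lam) * ‖x - y‖ ^ 2 := by
  classical
  have hm0 : (0:ℝ) < m := by exact_mod_cast Nat.lt_of_lt_of_le Nat.zero_lt_one hm
  have hd0 : (0:ℝ) < d := by exact_mod_cast Nat.lt_of_lt_of_le Nat.zero_lt_one (hm.trans hmd)
  have hL0 : (0:ℝ) < L := hlam.trans_le hlamL
  set g : EuclideanSpace ℝ (Fin d) := gradient U x - gradient U y with hgdef
  set z : EuclideanSpace ℝ (Fin d) := x - y with hzdef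
  set c : ℝ := γ * ((d : ℝ) / m) with hcdef
  have hgU : ∀ p : EuclideanSpace ℝ (Fin d), HasGradientAt U (gradient U p) p := fun p => (hdiff p).hasGradientAt
  -- gradient of the shifted convex function
  have hsq : ∀ p : EuclideanSpace ℝ (Fin d), HasFDerivAt (fun w : EuclideanSpace ℝ (Fin d) => lam / 2 * ‖w‖ ^ 2)
      ((InnerProductSpace.toDual ℝ (EuclideanSpace ℝ (Fin d))) (lam • p)) p := by
    intro p
    have h1 : HasFDerivAt (fun w : EuclideanSpace ℝ (Fin d) => (inner ℝ w w : ℝ))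
        ((fderivInnerCLM ℝ (p, p)).comp
          ((ContinuousLinearMap.id ℝ (EuclideanSpace ℝ (Fin d))).prod (ContinuousLinearMap.id ℝ (EuclideanSpace ℝ (Fin d))))) p :=
      (hasFDerivAt_id p).inner ℝ (hasFDerivAt_id p)
    have h2 := h1.const_mul (lam / 2)
    have hfe : (fun w : EuclideanSpace ℝ (Fin d) => lam / 2 * ‖w‖ ^ 2) = fun w : EuclideanSpace ℝ (Fin d) => lam / 2 * (inner ℝ w w : ℝ) := by
      funext w; rw [real_inner_self_eq_norm_sq]
    rw [hfe]
    refine h2.congr_fderiv ?_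
    symm
    apply ContinuousLinearMap.ext
    intro v
    simp only [InnerProductSpace.toDual_apply_apply, ContinuousLinearMap.coe_comp',
      Function.comp_apply, ContinuousLinearMap.prod_apply, ContinuousLinearMap.coe_id', id_eq,
      fderivInnerCLM_apply, ContinuousLinearMap.coe_smul', Pi.smul_apply, smul_eq_mul,
      real_inner_smul_left]
    rw [real_inner_comm v p]
    ring
  have hgradh : ∀ p : EuclideanSpace ℝ (Fin d),
      HasGradientAt (fun w : EuclideanSpace ℝ (Fin d) => U w - lam / 2 * ‖w‖ ^ 2) (gradient U p - lam • p) p := by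
    intro p
    rw [hasGradientAt_iff_hasFDerivAt]
    have h := (hgU p).hasFDerivAt.sub (hsq p)
    rwa [map_sub] 
  -- first-order lower bound for U (strong convexity version)
  have hfoU : ∀ a b : EuclideanSpace ℝ (Fin d),
      U a + (inner ℝ (gradient U a) (b - a) : ℝ) + lam / 2 * ‖b - a‖ ^ 2 ≤ U b := by
    intro a b
    have h1 := convex_first_order hgradh hconv a b
    have e1 : (inner ℝ (gradient U a - lam • a) (b - a) : ℝ)
        = (inner ℝ (gradient U a) (b - a) : ℝ) - lam * (inner ℝ a (b - a) : ℝ) := by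
      rw [inner_sub_left, real_inner_smul_left]
    have e2 : ‖b - a‖ ^ 2 = ‖b‖ ^ 2 - 2 * (inner ℝ b a : ℝ) + ‖a‖ ^ 2 := norm_sub_sq_real b a
    have e3 : (inner ℝ a (b - a) : ℝ) = (inner ℝ b a : ℝ) - ‖a‖ ^ 2 := by
      rw [inner_sub_right, real_inner_self_eq_norm_sq, real_inner_comm]
    rw [e1, e3] at h1
    nlinarith [h1, e2]
  have hfoU' : ∀ a b : EuclideanSpace ℝ (Fin d), U a + (inner ℝ (gradient U a) (b - a) : ℝ) ≤ U b := by
    intro a b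
    have := hfoU a b
    nlinarith [mul_nonneg hlam.le (sq_nonneg ‖b - a‖)]
  -- strong monotonicity
  have hmono : lam * ‖z‖ ^ 2 ≤ (inner ℝ g z : ℝ) := by
    have h1 := hfoU x y
    have h2 := hfoU y x
    have e1 : (inner ℝ (gradient U x) (y - x) : ℝ) = -(inner ℝ (gradient U x) z : ℝ) := by
      rw [hzdef, ← inner_neg_right, neg_sub]
    have e2 : (inner ℝ (gradient U y) (x - y) : ℝ) = (inner ℝ (gradient U y) z : ℝ) := by
      rw [hzdef]
    have e3 : (inner ℝ g z : ℝ)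
        = (inner ℝ (gradient U x) z : ℝ) - (inner ℝ (gradient U y) z : ℝ) := by
      rw [hgdef, inner_sub_left]
    have e4 : ‖y - x‖ = ‖z‖ := by rw [hzdef, norm_sub_rev]
    have e5 : ‖x - y‖ = ‖z‖ := by rw [hzdef]
    rw [e1, e4] at h1
    rw [e2, e5] at h2
    linarith [h1, h2, e3.ge, e3.le]
  -- co-coercivity
  have hcoco : (1 / L) * ‖g‖ ^ 2 ≤ (inner ℝ g z : ℝ) := by
    have := cocoercive_s1 hL0 hgU hsmooth hfoU' x y
    rwa [← hgdef, ← hzdef] at this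
  have hI0 : (0:ℝ) ≤ (inner ℝ g z : ℝ) :=
    le_trans (by positivity) hmono
  have hIG : ‖g‖ ^ 2 ≤ L * (inner ℝ g z : ℝ) := by
    have h := mul_le_mul_of_nonneg_left hcoco hL0.le
    have : L * ((1 / L) * ‖g‖ ^ 2) = ‖g‖ ^ 2 := by field_simp
    linarith [h, this.ge, this.le]
  -- measure-theoretic part
  have hcont : Continuous (fun V : Fin m → EuclideanSpace ℝ (Fin d) => projDirs V g) := by
    unfold projDirs
    refine continuous_finset_sum _ fun i _ => ?_
    exact (Continuous.inner (𝕜 := ℝ) (continuous_apply i : Continuous fun V : Fin m → EuclideanSpace ℝ (Fin d) => V i) continuous_const).smul (continuous_apply i : Continuous fun V : Fin m → EuclideanSpace ℝ (Fin d) => V i)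
  have hPbnd : ∀ᵐ V ∂ν, ‖projDirs V g‖ ≤ (m : ℝ) * ‖g‖ := by
    filter_upwards [hstiefel] with V hV
    calc ‖projDirs V g‖ ≤ ∑ i, ‖(inner ℝ (V i) g : ℝ) • V i‖ := norm_sum_le _ _
      _ ≤ ∑ _i : Fin m, ‖g‖ := by
          refine Finset.sum_le_sum fun i _ => ?_
          rw [norm_smul, Real.norm_eq_abs, hV.1 i, mul_one]
          calc |(inner ℝ (V i) g : ℝ)| ≤ ‖V i‖ * ‖g‖ := abs_real_inner_le_norm _ _
            _ = ‖g‖ := by rw [hV.1 i, one_mul]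
      _ = (m : ℝ) * ‖g‖ := by simp [Finset.sum_const, mul_comm]
  have hPint : Integrable (fun V : Fin m → EuclideanSpace ℝ (Fin d) => projDirs V g) ν := by
    refine Integrable.mono' (integrable_const ((m : ℝ) * ‖g‖)) hcont.aestronglyMeasurable ?_
    exact hPbnd
  have hint1 : ∫ V, (inner ℝ z (projDirs V g) : ℝ) ∂ν = ((m : ℝ) / d) * (inner ℝ z g : ℝ) := by
    rw [integral_inner hPint z, hmean g, real_inner_smul_right]
  have hint2 : ∫ V, (inner ℝ g (projDirs V g) : ℝ) ∂ν = ((m : ℝ) / d) * ‖g‖ ^ 2 := by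
    rw [integral_inner hPint g, hmean g, real_inner_smul_right, real_inner_self_eq_norm_sq]
  have hae : ∀ᵐ V ∂ν, ‖z - c • projDirs V g‖ ^ 2
      = ‖z‖ ^ 2 - 2 * c * (inner ℝ z (projDirs V g) : ℝ)
        + c ^ 2 * (inner ℝ g (projDirs V g) : ℝ) := by
    filter_upwards [hstiefel] with V hV
    have hPP : ‖projDirs V g‖ ^ 2 = (inner ℝ g (projDirs V g) : ℝ) := by
      have h1 : (inner ℝ (projDirs V g) (projDirs V g) : ℝ)
          = ∑ i, (inner ℝ (V i) g : ℝ) * (inner ℝ (V i) g : ℝ) := by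
        simpa [projDirs] using hV.inner_sum (fun i => (inner ℝ (V i) g : ℝ))
          (fun i => (inner ℝ (V i) g : ℝ)) Finset.univ
      have h2 : (inner ℝ g (projDirs V g) : ℝ)
          = ∑ i, (inner ℝ (V i) g : ℝ) * (inner ℝ (V i) g : ℝ) := by
        unfold projDirs
        rw [inner_sum]
        refine Finset.sum_congr rfl fun i _ => ?_
        rw [real_inner_smul_right, real_inner_comm]
      rw [← real_inner_self_eq_norm_sq, h1, h2]
    rw [norm_sub_sq_real, real_inner_smul_right, norm_smul, mul_pow, Real.norm_eq_abs, sq_abs,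
      hPP]
    ring
  have hF1 : Integrable (fun V : Fin m → EuclideanSpace ℝ (Fin d) => (inner ℝ z (projDirs V g) : ℝ)) ν :=
    hPint.const_inner z
  have hF2 : Integrable (fun V : Fin m → EuclideanSpace ℝ (Fin d) => (inner ℝ g (projDirs V g) : ℝ)) ν :=
    hPint.const_inner g
  have hstep : ∫ V, ‖z - c • projDirs V g‖ ^ 2 ∂ν
      = ‖z‖ ^ 2 - 2 * c * (((m : ℝ) / d) * (inner ℝ z g : ℝ))
        + c ^ 2 * (((m : ℝ) / d) * ‖g‖ ^ 2) := by
    have hA : Integrable (fun V : Fin m → EuclideanSpace ℝ (Fin d) =>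
        ‖z‖ ^ 2 - 2 * c * (inner ℝ z (projDirs V g) : ℝ)) ν :=
      (integrable_const _).sub (hF1.const_mul (2 * c))
    have hB : Integrable (fun V : Fin m → EuclideanSpace ℝ (Fin d) =>
        c ^ 2 * (inner ℝ g (projDirs V g) : ℝ)) ν := hF2.const_mul (c ^ 2)
    have hC : Integrable (fun _ : Fin m → EuclideanSpace ℝ (Fin d) => ‖z‖ ^ 2) ν :=
      integrable_const _
    have hD : Integrable (fun V : Fin m → EuclideanSpace ℝ (Fin d) =>
        2 * c * (inner ℝ z (projDirs V g) : ℝ)) ν := hF1.const_mul (2 * c)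
    rw [integral_congr_ae hae, integral_add hA hB, integral_sub hC hD,
      integral_const_mul, integral_const_mul, hint1, hint2, integral_const]
    simp
  rw [hstep]
  -- final algebra
  have hIz : (inner ℝ z g : ℝ) = (inner ℝ g z : ℝ) := real_inner_comm _ _
  rw [hIz]
  have hcm : c * ((m : ℝ) / d) = γ := by
    rw [hcdef]; field_simp
  have hc0 : (0:ℝ) ≤ c := by
    rw [hcdef]; positivity
  have hcL : c * L ≤ 1 := by
    have h1 : γ * (L * d) ≤ m := (le_div_iff₀ (by positivity)).mp hγ'
    rw [hcdef]
    have h2 : γ * ((d : ℝ) / m) * L = γ * (L * d) / m := by ring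
    rw [h2, div_le_one hm0]
    exact h1
  have key : c ^ 2 * (((m : ℝ) / d) * ‖g‖ ^ 2) ≤ γ * (inner ℝ g z : ℝ) := by
    have h1 : c ^ 2 * (((m : ℝ) / d) * ‖g‖ ^ 2) = γ * (c * ‖g‖ ^ 2) := by
      have h1' : c ^ 2 * (((m : ℝ) / d) * ‖g‖ ^ 2)
          = (c * ((m : ℝ) / d)) * (c * ‖g‖ ^ 2) := by ring
      rw [h1', hcm]
    rw [h1]
    have h2 : c * ‖g‖ ^ 2 ≤ c * (L * (inner ℝ g z : ℝ)) :=
      mul_le_mul_of_nonneg_left hIG hc0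
    have h4 : c * L * (inner ℝ g z : ℝ) ≤ 1 * (inner ℝ g z : ℝ) :=
      mul_le_mul_of_nonneg_right hcL hI0
    have h3 : c * (L * (inner ℝ g z : ℝ)) = c * L * (inner ℝ g z : ℝ) := (mul_assoc _ _ _).symm
    have h5 : c * ‖g‖ ^ 2 ≤ (inner ℝ g z : ℝ) :=
      h2.trans (h3.le.trans (h4.trans (one_mul _).le))
    exact mul_le_mul_of_nonneg_left h5 hγ.le
  have h2cI : c * ((m : ℝ) / d) * (inner ℝ g z : ℝ) = γ * (inner ℝ g z : ℝ) := by rw [hcm]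
  have h7 : γ * (lam * ‖z‖ ^ 2) ≤ γ * (inner ℝ g z : ℝ) :=
    mul_le_mul_of_nonneg_left hmono hγ.le
  linarith [key, h2cI, h7]
end
end

section
/- Write x = (x₁, x₂) ∈ ℝ^{d−m} × ℝ^m, let π be a probability measure on ℝ^d absolutely continuous with respect to Lebesgue measure with density π(x₁, x₂), marginal density π₁(x₁) = ∫ π(x₁, x₂) dx₂, and conditional density π_{2|x₁}(x₂) = π(x₁, x₂)/π₁(x₁). Let q₁(x₁, y₁) be a proposal density on ℝ^{d−m} depending only on x₁, and q₂(x, y₁, y₂) a proposal density in y₂ ∈ ℝ^m which may depend on x = (x₁, x₂) and y₁. Define the off-diagonal Metropolis–Hastings density p(x, y) = q₁(x₁, y₁) q₂(x, y₁, y₂) · min(1, [π₁(y₁) π_{2|y₁}(y₂) q₁(y₁, x₁) q₂(y, x₁, x₂)] / [π₁(x₁) π_{2|x₁}(x₂) q₁(x₁, y₁) q₂(x, y₁, y₂)]). Then for every x₁ ∈ ℝ^{d−m}: ∫_{ℝ^m} π_{2|x₁}(x₂) [∫_{ℝ^d} p((x₁, x₂), y) dy] dx₂ ≤ ∫_{ℝ^{d−m}}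 q₁(x₁, y₁) min(1, π₁(y₁) q₁(y₁, x₁) / (π₁(x₁) q₁(x₁, y₁))) dy₁; that is, the conditional average acceptance probability of the full-dimensional chain is bounded by the acceptance probability of the marginal Metropolis–Hastings chain on the x₁ coordinate. -/
open MeasureTheory

noncomputable section

lemma aux_integrable_of_integral_eq_one {α : Type*} [MeasurableSpace α] {μ : Measure α}
    {f : α → ℝ} (h : ∫ a, f a ∂μ = 1) : Integrable f μ := by
  by_contra hc
  rw [integral_undef hc] at h
  norm_num at h

lemma aux_min_le (a b c e : ℝ) (ha : 0 ≤ a) (hb : 0 ≤ b) (hc : 0 ≤ c) (he : 0 ≤ e) :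
    a * min 1 (e * b / (c * a)) ≤ min a (e / c * b) := by
  rcases eq_or_lt_of_le ha with h | ha'
  · rw [← h, zero_mul]
    exact le_min le_rfl (mul_nonneg (div_nonneg he hc) hb)
  rcases eq_or_lt_of_le hc with h | hc'
  · rw [← h, zero_mul, div_zero, div_zero, zero_mul]
    simp [min_eq_right (le_of_lt ha'), min_eq_right (zero_le_one' ℝ)]
  · rw [mul_min_of_nonneg _ _ ha, mul_one]
    have h2 : a * (e * b / (c * a)) = e / c * b := by
      field_simp
    rw [h2]

/-- the conditional average acceptance probability of a decomposable
Metropolis–Hastings kernel is bounded by that of the marginal chain on the first block. -/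
theorem decomposable_kernel_acceptance_bound
    (n m : ℕ) (hn : 1 ≤ n) (hm : 1 ≤ m)
    (p : EuclideanSpace ℝ (Fin n) × EuclideanSpace ℝ (Fin m) → ℝ)
    (hp0 : ∀ z, 0 ≤ p z) (hpmeas : Measurable p) (hp1 : ∫ z, p z = 1)
    (q1 : EuclideanSpace ℝ (Fin n) → EuclideanSpace ℝ (Fin n) → ℝ)
    (hq1meas : Measurable fun z : EuclideanSpace ℝ (Fin n) × EuclideanSpace ℝ (Fin n) =>
      q1 z.1 z.2)
    (hq10 : ∀ a b, 0 ≤ q1 a b) (hq11 : ∀ a, ∫ b, q1 a b = 1)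
    (q2 : EuclideanSpace ℝ (Fin n) × EuclideanSpace ℝ (Fin m) →
      EuclideanSpace ℝ (Fin n) → EuclideanSpace ℝ (Fin m) → ℝ)
    (hq2meas : Measurable fun z :
      (EuclideanSpace ℝ (Fin n) × EuclideanSpace ℝ (Fin m)) ×
        EuclideanSpace ℝ (Fin n) × EuclideanSpace ℝ (Fin m) => q2 z.1 z.2.1 z.2.2)
    (hq20 : ∀ x y1 y2, 0 ≤ q2 x y1 y2) (hq21 : ∀ x y1, ∫ y2, q2 x y1 y2 = 1)
    (x1 : EuclideanSpace ℝ (Fin n)) :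
    let p1 : EuclideanSpace ℝ (Fin n) → ℝ := fun a => ∫ b, p (a, b)
    let pcond : EuclideanSpace ℝ (Fin n) → EuclideanSpace ℝ (Fin m) → ℝ := fun a b =>
      p (a, b) / p1 a
    let acc : EuclideanSpace ℝ (Fin n) × EuclideanSpace ℝ (Fin m) →
        EuclideanSpace ℝ (Fin n) × EuclideanSpace ℝ (Fin m) → ℝ := fun x y =>
      q1 x.1 y.1 * q2 x y.1 y.2 *
        min 1 ((p1 y.1 * pcond y.1 y.2 * q1 y.1 x.1 * q2 y x.1 x.2) /
          (p1 x.1 * pcond x.1 x.2 * q1 x.1 y.1 * q2 x y.1 y.2))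
    ∫ x2, pcond x1 x2 * ∫ y, acc (x1, x2) y
      ≤ ∫ y1, q1 x1 y1 * min 1 (p1 y1 * q1 y1 x1 / (p1 x1 * q1 x1 y1)) := by
  intro p1 pcond acc
  -- basic facts
  have hp1sm : StronglyMeasurable p1 := hpmeas.stronglyMeasurable.integral_prod_right'
  have hp1m : Measurable p1 := hp1sm.measurable
  have hp1nn : ∀ a, 0 ≤ p1 a := fun a => integral_nonneg fun b => hp0 _
  have hpcnn : ∀ a b, 0 ≤ pcond a b := fun a b => div_nonneg (hp0 _) (hp1nn a)
  have hq1int : ∀ a, Integrable (q1 a) := fun a => aux_integrable_of_integral_eq_one (hq11 a)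
  have hq2int : ∀ x y1, Integrable (q2 x y1) :=
    fun x y1 => aux_integrable_of_integral_eq_one (hq21 x y1)
  have hpcond : ∀ a, Integrable (pcond a) ∧ ∫ b, pcond a b ≤ 1 := by
    intro a
    rcases eq_or_lt_of_le (hp1nn a) with h | h
    · have hz : pcond a = fun _ => (0 : ℝ) := by
        funext b
        show p (a, b) / p1 a = 0
        rw [← h, div_zero]
      rw [hz]
      refine ⟨integrable_zero _ _ _, by simp⟩
    · have hia : Integrable (fun b => p (a, b)) := by
        by_contra hc
        have h0 : p1 a = 0 := integral_undef hc
        rw [h0] at h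
        exact lt_irrefl _ h
      have he : pcond a = fun b => (p1 a)⁻¹ * p (a, b) := by
        funext b
        show p (a, b) / p1 a = _
        rw [div_eq_inv_mul]
      constructor
      · rw [he]; exact hia.const_mul _
      · rw [he, integral_const_mul]
        rw [inv_mul_le_iff₀ h, mul_one]
  have hpcondInt : ∀ a, Integrable (pcond a) := fun a => (hpcond a).1
  have hpcondI1 : ∀ a, ∫ b, pcond a b ≤ 1 := fun a => (hpcond a).2
  -- measurability of pcond as a two-variable function
  have hpcm : Measurable (fun w : EuclideanSpace ℝ (Fin n) × EuclideanSpace ℝ (Fin m) =>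
      pcond w.1 w.2) := by
    show Measurable (fun w : EuclideanSpace ℝ (Fin n) × EuclideanSpace ℝ (Fin m) =>
      p (w.1, w.2) / p1 w.1)
    exact (hpmeas.comp (measurable_fst.prodMk measurable_snd)).div (hp1m.comp measurable_fst)
  -- acc nonneg
  have haccnn : ∀ x y, 0 ≤ acc x y := by
    intro x y
    refine mul_nonneg (mul_nonneg (hq10 _ _) (hq20 _ _ _)) (le_min zero_le_one ?_)
    exact div_nonneg
      (mul_nonneg (mul_nonneg (mul_nonneg (hp1nn _) (hpcnn _ _)) (hq10 _ _)) (hq20 _ _ _))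
      (mul_nonneg (mul_nonneg (mul_nonneg (hp1nn _) (hpcnn _ _)) (hq10 _ _)) (hq20 _ _ _))

  -- pointwise bound acc ≤ q1 * q2
  have haccle : ∀ x y, acc x y ≤ q1 x.1 y.1 * q2 x y.1 y.2 := by
    intro x y
    refine mul_le_of_le_one_right (mul_nonneg (hq10 _ _) (hq20 _ _ _)) (min_le_left _ _)
  -- master measurability of acc
  have hmaster : Measurable (fun w :
      (EuclideanSpace ℝ (Fin n) × EuclideanSpace ℝ (Fin m)) ×
        (EuclideanSpace ℝ (Fin n) × EuclideanSpace ℝ (Fin m)) => acc w.1 w.2) := by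
    have m1 : Measurable (fun w :
        (EuclideanSpace ℝ (Fin n) × EuclideanSpace ℝ (Fin m)) ×
          (EuclideanSpace ℝ (Fin n) × EuclideanSpace ℝ (Fin m)) => q1 w.1.1 w.2.1) :=
      hq1meas.comp (measurable_fst.fst.prodMk measurable_snd.fst)
    have m2 : Measurable (fun w :
        (EuclideanSpace ℝ (Fin n) × EuclideanSpace ℝ (Fin m)) ×
          (EuclideanSpace ℝ (Fin n) × EuclideanSpace ℝ (Fin m)) => q2 w.1 w.2.1 w.2.2) :=
      hq2meas
    have m3 : Measurable (fun w :
        (EuclideanSpace ℝ (Fin n) × EuclideanSpace ℝ (Fin m)) ×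
          (EuclideanSpace ℝ (Fin n) × EuclideanSpace ℝ (Fin m)) => p1 w.2.1) :=
      hp1m.comp measurable_snd.fst
    have m4 : Measurable (fun w :
        (EuclideanSpace ℝ (Fin n) × EuclideanSpace ℝ (Fin m)) ×
          (EuclideanSpace ℝ (Fin n) × EuclideanSpace ℝ (Fin m)) => p (w.2.1, w.2.2)) :=
      hpmeas.comp (measurable_snd.fst.prodMk measurable_snd.snd)
    have m5 : Measurable (fun w :
        (EuclideanSpace ℝ (Fin n) × EuclideanSpace ℝ (Fin m)) ×
          (EuclideanSpace ℝ (Fin n) × EuclideanSpace ℝ (Fin m)) => q1 w.2.1 w.1.1) :=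
      hq1meas.comp (measurable_snd.fst.prodMk measurable_fst.fst)
    have m6 : Measurable (fun w :
        (EuclideanSpace ℝ (Fin n) × EuclideanSpace ℝ (Fin m)) ×
          (EuclideanSpace ℝ (Fin n) × EuclideanSpace ℝ (Fin m)) => q2 w.2 w.1.1 w.1.2) :=
      hq2meas.comp (measurable_snd.prodMk measurable_fst)
    have m7 : Measurable (fun w :
        (EuclideanSpace ℝ (Fin n) × EuclideanSpace ℝ (Fin m)) ×
          (EuclideanSpace ℝ (Fin n) × EuclideanSpace ℝ (Fin m)) => p1 w.1.1) :=
      hp1m.comp measurable_fst.fst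
    have m8 : Measurable (fun w :
        (EuclideanSpace ℝ (Fin n) × EuclideanSpace ℝ (Fin m)) ×
          (EuclideanSpace ℝ (Fin n) × EuclideanSpace ℝ (Fin m)) => p (w.1.1, w.1.2)) :=
      hpmeas.comp (measurable_fst.fst.prodMk measurable_fst.snd)
    show Measurable (fun w :
        (EuclideanSpace ℝ (Fin n) × EuclideanSpace ℝ (Fin m)) ×
          (EuclideanSpace ℝ (Fin n) × EuclideanSpace ℝ (Fin m)) =>
      q1 w.1.1 w.2.1 * q2 w.1 w.2.1 w.2.2 *
        min 1 ((p1 w.2.1 * (p (w.2.1, w.2.2) / p1 w.2.1) * q1 w.2.1 w.1.1 * q2 w.2 w.1.1 w.1.2) /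
          (p1 w.1.1 * (p (w.1.1, w.1.2) / p1 w.1.1) * q1 w.1.1 w.2.1 * q2 w.1 w.2.1 w.2.2)))
    exact (m1.mul m2).mul (measurable_const.min
      ((((m3.mul (m4.div m3)).mul m5).mul m6).div (((m7.mul (m8.div m7)).mul m1).mul m2)))
  -- integrability of the majorant q1 * q2 over the product
  have hMint : ∀ x : EuclideanSpace ℝ (Fin n) × EuclideanSpace ℝ (Fin m),
      Integrable (fun y : EuclideanSpace ℝ (Fin n) × EuclideanSpace ℝ (Fin m) =>
        q1 x1 y.1 * q2 x y.1 y.2) := by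
    intro x
    rw [Measure.volume_eq_prod]
    have hmeasM : Measurable (fun y : EuclideanSpace ℝ (Fin n) × EuclideanSpace ℝ (Fin m) =>
        q1 x1 y.1 * q2 x y.1 y.2) :=
      (hq1meas.comp (measurable_const.prodMk measurable_fst)).mul
        (hq2meas.comp (measurable_const.prodMk measurable_id))
    refine (integrable_prod_iff hmeasM.aestronglyMeasurable).2
      ⟨ae_of_all _ fun y1 => (hq2int x y1).const_mul (q1 x1 y1), ?_⟩
    have hnorm : (fun y1 => ∫ y2, ‖q1 x1 y1 * q2 x y1 y2‖) = fun y1 => q1 x1 y1 := by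
      funext y1
      have h1 : (fun y2 => ‖q1 x1 y1 * q2 x y1 y2‖) =
          fun y2 => q1 x1 y1 * q2 x y1 y2 := by
        funext y2
        rw [Real.norm_eq_abs, abs_of_nonneg (mul_nonneg (hq10 _ _) (hq20 _ _ _))]
      rw [h1, integral_const_mul, hq21, mul_one]
    rw [hnorm]
    exact hq1int x1
  -- acc (x1, x2) is integrable
  have haccint : ∀ x2, Integrable (acc (x1, x2)) := by
    intro x2
    refine (hMint (x1, x2)).mono
      ((hmaster.comp (measurable_const.prodMk measurable_id)).aestronglyMeasurable)
      (ae_of_all _ fun y => ?_)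
    rw [Real.norm_eq_abs, Real.norm_eq_abs, abs_of_nonneg (haccnn _ _),
      abs_of_nonneg (mul_nonneg (hq10 _ _) (hq20 _ _ _))]
    exact haccle (x1, x2) y
  -- the key pointwise inequality
  have hkey : ∀ (y1 : EuclideanSpace ℝ (Fin n)) (x2 y2 : EuclideanSpace ℝ (Fin m)),
      pcond x1 x2 * acc (x1, x2) (y1, y2) ≤
        q1 x1 y1 * min (pcond x1 x2 * q2 (x1, x2) y1 y2)
          ((p1 y1 * q1 y1 x1) / (p1 x1 * q1 x1 y1) * (pcond y1 y2 * q2 (y1, y2) x1 x2)) := by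
    intro y1 x2 y2
    have base := aux_min_le (pcond x1 x2 * q2 (x1, x2) y1 y2)
      (pcond y1 y2 * q2 (y1, y2) x1 x2) (p1 x1 * q1 x1 y1) (p1 y1 * q1 y1 x1)
      (mul_nonneg (hpcnn _ _) (hq20 _ _ _)) (mul_nonneg (hpcnn _ _) (hq20 _ _ _))
      (mul_nonneg (hp1nn _) (hq10 _ _)) (mul_nonneg (hp1nn _) (hq10 _ _))
    have e1 : pcond x1 x2 * acc (x1, x2) (y1, y2) =
        q1 x1 y1 * ((pcond x1 x2 * q2 (x1, x2) y1 y2) *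
          min 1 ((p1 y1 * q1 y1 x1) * (pcond y1 y2 * q2 (y1, y2) x1 x2) /
            ((p1 x1 * q1 x1 y1) * (pcond x1 x2 * q2 (x1, x2) y1 y2)))) := by
      show pcond x1 x2 * (q1 x1 y1 * q2 (x1, x2) y1 y2 *
        min 1 ((p1 y1 * pcond y1 y2 * q1 y1 x1 * q2 (y1, y2) x1 x2) /
          (p1 x1 * pcond x1 x2 * q1 x1 y1 * q2 (x1, x2) y1 y2))) = _
      rw [show (p1 y1 * pcond y1 y2 * q1 y1 x1 * q2 (y1, y2) x1 x2) /
          (p1 x1 * pcond x1 x2 * q1 x1 y1 * q2 (x1, x2) y1 y2) =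
          (p1 y1 * q1 y1 x1) * (pcond y1 y2 * q2 (y1, y2) x1 x2) /
            ((p1 x1 * q1 x1 y1) * (pcond x1 x2 * q2 (x1, x2) y1 y2)) from by ring]
      ring
    rw [e1]
    exact mul_le_mul_of_nonneg_left base (hq10 _ _)
  -- step 1: rewrite LHS as a triple iterated integral
  have h1 : ∀ x2, pcond x1 x2 * ∫ y, acc (x1, x2) y =
      ∫ y1, ∫ y2, pcond x1 x2 * acc (x1, x2) (y1, y2) := by
    intro x2
    simp_rw [integral_const_mul]
    rw [Measure.volume_eq_prod, integral_prod _ (haccint x2)]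
  -- integrability for the Fubini swap of (x2, y1)
  have hgint : Integrable (Function.uncurry fun x2 y1 =>
      ∫ y2, pcond x1 x2 * acc (x1, x2) (y1, y2)) (volume.prod volume) := by
    have hphi : Measurable (fun w :
        (EuclideanSpace ℝ (Fin m) × EuclideanSpace ℝ (Fin n)) × EuclideanSpace ℝ (Fin m) =>
        pcond x1 w.1.1 * acc (x1, w.1.1) (w.1.2, w.2)) := by
      have mA : Measurable (fun w :
          (EuclideanSpace ℝ (Fin m) × EuclideanSpace ℝ (Fin n)) × EuclideanSpace ℝ (Fin m) =>
          pcond x1 w.1.1) := by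
        show Measurable (fun w :
          (EuclideanSpace ℝ (Fin m) × EuclideanSpace ℝ (Fin n)) × EuclideanSpace ℝ (Fin m) =>
          p (x1, w.1.1) / p1 x1)
        exact (hpmeas.comp (measurable_const.prodMk measurable_fst.fst)).div measurable_const
      exact mA.mul (hmaster.comp ((measurable_const.prodMk measurable_fst.fst).prodMk
        (measurable_fst.snd.prodMk measurable_snd)))
    have hsm : StronglyMeasurable (Function.uncurry fun x2 y1 =>
        ∫ y2, pcond x1 x2 * acc (x1, x2) (y1, y2)) :=
      hphi.stronglyMeasurable.integral_prod_right'
    refine (Integrable.mul_prod (hpcondInt x1) (hq1int x1)).mono hsm.aestronglyMeasurable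
      (ae_of_all _ fun w => ?_)
    have hub : ∫ y2, pcond x1 w.1 * acc (x1, w.1) (w.2, y2) ≤ pcond x1 w.1 * q1 x1 w.2 := by
      have hc : ∫ y2, pcond x1 w.1 * (q1 x1 w.2 * q2 (x1, w.1) w.2 y2) =
          pcond x1 w.1 * q1 x1 w.2 := by
        rw [integral_const_mul, integral_const_mul, hq21, mul_one]
      rw [← hc]
      refine integral_mono_of_nonneg
        (ae_of_all _ fun y2 => mul_nonneg (hpcnn _ _) (haccnn _ _))
        (((hq2int _ _).const_mul _).const_mul _) (ae_of_all _ fun y2 => ?_)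
      exact mul_le_mul_of_nonneg_left (haccle (x1, w.1) (w.2, y2)) (hpcnn _ _)
    have hlb : 0 ≤ ∫ y2, pcond x1 w.1 * acc (x1, w.1) (w.2, y2) :=
      integral_nonneg fun y2 => mul_nonneg (hpcnn _ _) (haccnn _ _)
    show ‖∫ y2, pcond x1 w.1 * acc (x1, w.1) (w.2, y2)‖ ≤ ‖pcond x1 w.1 * q1 x1 w.2‖
    rw [Real.norm_eq_abs, Real.norm_eq_abs, abs_of_nonneg hlb,
      abs_of_nonneg (mul_nonneg (hpcnn _ _) (hq10 _ _))]
    exact hub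
  -- integrability of the RHS integrand
  have hRHSint : Integrable (fun y1 =>
      q1 x1 y1 * min 1 (p1 y1 * q1 y1 x1 / (p1 x1 * q1 x1 y1))) := by
    have hmeasR : Measurable (fun y1 =>
        q1 x1 y1 * min 1 (p1 y1 * q1 y1 x1 / (p1 x1 * q1 x1 y1))) := by
      have mq : Measurable (fun y1 : EuclideanSpace ℝ (Fin n) => q1 x1 y1) :=
        hq1meas.comp (measurable_const.prodMk measurable_id)
      have mq' : Measurable (fun y1 : EuclideanSpace ℝ (Fin n) => q1 y1 x1) :=
        hq1meas.comp (measurable_id.prodMk measurable_const)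
      exact mq.mul (measurable_const.min
        (((hp1m.mul mq').div (mq.const_mul _))))
    refine (hq1int x1).mono hmeasR.aestronglyMeasurable (ae_of_all _ fun y1 => ?_)
    have hRnn : (0:ℝ) ≤ p1 y1 * q1 y1 x1 / (p1 x1 * q1 x1 y1) :=
      div_nonneg (mul_nonneg (hp1nn _) (hq10 _ _)) (mul_nonneg (hp1nn _) (hq10 _ _))
    rw [Real.norm_eq_abs, Real.norm_eq_abs,
      abs_of_nonneg (mul_nonneg (hq10 _ _) (le_min zero_le_one hRnn)),
      abs_of_nonneg (hq10 _ _)]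
    exact mul_le_of_le_one_right (hq10 _ _) (min_le_left _ _)
  -- main calculation
  calc ∫ x2, pcond x1 x2 * ∫ y, acc (x1, x2) y
      = ∫ x2, ∫ y1, ∫ y2, pcond x1 x2 * acc (x1, x2) (y1, y2) :=
        integral_congr_ae (ae_of_all _ h1)
    _ = ∫ y1, ∫ x2, ∫ y2, pcond x1 x2 * acc (x1, x2) (y1, y2) :=
        integral_integral_swap hgint
    _ ≤ ∫ y1, q1 x1 y1 * min 1 (p1 y1 * q1 y1 x1 / (p1 x1 * q1 x1 y1)) := by
        refine integral_mono_of_nonneg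
          (ae_of_all _ fun y1 => integral_nonneg fun x2 =>
            integral_nonneg fun y2 => mul_nonneg (hpcnn _ _) (haccnn _ _))
          hRHSint (ae_of_all _ fun y1 => ?_)
        have hRnn : (0:ℝ) ≤ p1 y1 * q1 y1 x1 / (p1 x1 * q1 x1 y1) :=
          div_nonneg (mul_nonneg (hp1nn _) (hq10 _ _)) (mul_nonneg (hp1nn _) (hq10 _ _))
        show ∫ x2, ∫ y2, pcond x1 x2 * acc (x1, x2) (y1, y2) ≤
          q1 x1 y1 * min 1 (p1 y1 * q1 y1 x1 / (p1 x1 * q1 x1 y1))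
        rw [mul_min_of_nonneg _ _ (hq10 x1 y1), mul_one]
        refine le_min ?_ ?_
        · -- bound by q1 x1 y1
          have step1 : ∀ x2, ∫ y2, pcond x1 x2 * acc (x1, x2) (y1, y2) ≤
              q1 x1 y1 * pcond x1 x2 := by
            intro x2
            have hc : ∫ y2, q1 x1 y1 * (pcond x1 x2 * q2 (x1, x2) y1 y2) =
                q1 x1 y1 * pcond x1 x2 := by
              rw [integral_const_mul, integral_const_mul, hq21, mul_one]
            rw [← hc]
            refine integral_mono_of_nonneg
              (ae_of_all _ fun y2 => mul_nonneg (hpcnn _ _) (haccnn _ _))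
              (((hq2int _ _).const_mul _).const_mul _) (ae_of_all _ fun y2 => ?_)
            exact le_trans (hkey y1 x2 y2)
              (mul_le_mul_of_nonneg_left (min_le_left _ _) (hq10 _ _))
          calc ∫ x2, ∫ y2, pcond x1 x2 * acc (x1, x2) (y1, y2)
              ≤ ∫ x2, q1 x1 y1 * pcond x1 x2 :=
                integral_mono_of_nonneg
                  (ae_of_all _ fun x2 => integral_nonneg fun y2 =>
                    mul_nonneg (hpcnn _ _) (haccnn _ _))
                  ((hpcondInt x1).const_mul _) (ae_of_all _ step1)
            _ = q1 x1 y1 * ∫ x2, pcond x1 x2 := integral_const_mul _ _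
            _ ≤ q1 x1 y1 * 1 := mul_le_mul_of_nonneg_left (hpcondI1 x1) (hq10 _ _)
            _ = q1 x1 y1 := mul_one _
        · -- bound by q1 x1 y1 * R
          have hhm : Measurable (fun w : EuclideanSpace ℝ (Fin m) × EuclideanSpace ℝ (Fin m) =>
              pcond x1 w.1 * acc (x1, w.1) (y1, w.2)) := by
            have mA : Measurable (fun w :
                EuclideanSpace ℝ (Fin m) × EuclideanSpace ℝ (Fin m) => pcond x1 w.1) := by
              show Measurable (fun w :
                EuclideanSpace ℝ (Fin m) × EuclideanSpace ℝ (Fin m) => p (x1, w.1) / p1 x1)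
              exact (hpmeas.comp (measurable_const.prodMk measurable_fst)).div measurable_const
            exact mA.mul (hmaster.comp ((measurable_const.prodMk measurable_fst).prodMk
              (measurable_const.prodMk measurable_snd)))
          have hFf : Integrable (fun w : EuclideanSpace ℝ (Fin m) × EuclideanSpace ℝ (Fin m) =>
              pcond x1 w.1 * q2 (x1, w.1) y1 w.2) (volume.prod volume) := by
            have hmeasF : Measurable (fun w :
                EuclideanSpace ℝ (Fin m) × EuclideanSpace ℝ (Fin m) =>
                pcond x1 w.1 * q2 (x1, w.1) y1 w.2) := by
              have mA : Measurable (fun w :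
                  EuclideanSpace ℝ (Fin m) × EuclideanSpace ℝ (Fin m) => pcond x1 w.1) := by
                show Measurable (fun w :
                  EuclideanSpace ℝ (Fin m) × EuclideanSpace ℝ (Fin m) => p (x1, w.1) / p1 x1)
                exact (hpmeas.comp
                  (measurable_const.prodMk measurable_fst)).div measurable_const
              exact mA.mul (hq2meas.comp ((measurable_const.prodMk measurable_fst).prodMk
                (measurable_const.prodMk measurable_snd)))
            refine (integrable_prod_iff hmeasF.aestronglyMeasurable).2
              ⟨ae_of_all _ fun x2 => (hq2int (x1, x2) y1).const_mul (pcond x1 x2), ?_⟩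
            have hnorm : (fun x2 => ∫ y2, ‖pcond x1 x2 * q2 (x1, x2) y1 y2‖) =
                fun x2 => pcond x1 x2 := by
              funext x2
              have h2 : (fun y2 => ‖pcond x1 x2 * q2 (x1, x2) y1 y2‖) =
                  fun y2 => pcond x1 x2 * q2 (x1, x2) y1 y2 := by
                funext y2
                rw [Real.norm_eq_abs, abs_of_nonneg (mul_nonneg (hpcnn _ _) (hq20 _ _ _))]
              rw [h2, integral_const_mul, hq21, mul_one]
            rw [hnorm]
            exact hpcondInt x1
          have hhint : Integrable (fun w :
              EuclideanSpace ℝ (Fin m) × EuclideanSpace ℝ (Fin m) =>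
              pcond x1 w.1 * acc (x1, w.1) (y1, w.2)) (volume.prod volume) := by
            refine (hFf.const_mul (q1 x1 y1)).mono hhm.aestronglyMeasurable
              (ae_of_all _ fun w => ?_)
            rw [Real.norm_eq_abs, Real.norm_eq_abs,
              abs_of_nonneg (mul_nonneg (hpcnn _ _) (haccnn _ _)),
              abs_of_nonneg (mul_nonneg (hq10 _ _)
                (mul_nonneg (hpcnn _ _) (hq20 _ _ _)))]
            exact le_trans (hkey y1 w.1 w.2)
              (mul_le_mul_of_nonneg_left (min_le_left _ _) (hq10 _ _))
          have hswap : ∫ x2, ∫ y2, pcond x1 x2 * acc (x1, x2) (y1, y2) =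
              ∫ y2, ∫ x2, pcond x1 x2 * acc (x1, x2) (y1, y2) :=
            integral_integral_swap hhint
          rw [hswap]
          have step2 : ∀ y2, ∫ x2, pcond x1 x2 * acc (x1, x2) (y1, y2) ≤
              q1 x1 y1 * ((p1 y1 * q1 y1 x1 / (p1 x1 * q1 x1 y1)) * pcond y1 y2) := by
            intro y2
            have hc : ∫ x2, q1 x1 y1 * ((p1 y1 * q1 y1 x1 / (p1 x1 * q1 x1 y1)) *
                (pcond y1 y2 * q2 (y1, y2) x1 x2)) =
                q1 x1 y1 * ((p1 y1 * q1 y1 x1 / (p1 x1 * q1 x1 y1)) * pcond y1 y2) := by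
              rw [integral_const_mul, integral_const_mul, integral_const_mul, hq21, mul_one]
            rw [← hc]
            refine integral_mono_of_nonneg
              (ae_of_all _ fun x2 => mul_nonneg (hpcnn _ _) (haccnn _ _))
              ((((hq2int _ _).const_mul _).const_mul _).const_mul _)
              (ae_of_all _ fun x2 => ?_)
            exact le_trans (hkey y1 x2 y2)
              (mul_le_mul_of_nonneg_left (min_le_right _ _) (hq10 _ _))
          calc ∫ y2, ∫ x2, pcond x1 x2 * acc (x1, x2) (y1, y2)
              ≤ ∫ y2, q1 x1 y1 * ((p1 y1 * q1 y1 x1 / (p1 x1 * q1 x1 y1)) * pcond y1 y2) :=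
                integral_mono_of_nonneg
                  (ae_of_all _ fun y2 => integral_nonneg fun x2 =>
                    mul_nonneg (hpcnn _ _) (haccnn _ _))
                  (((hpcondInt y1).const_mul _).const_mul _) (ae_of_all _ step2)
            _ = q1 x1 y1 * ((p1 y1 * q1 y1 x1 / (p1 x1 * q1 x1 y1)) * ∫ y2, pcond y1 y2) := by
                rw [integral_const_mul, integral_const_mul]
            _ ≤ q1 x1 y1 * ((p1 y1 * q1 y1 x1 / (p1 x1 * q1 x1 y1)) * 1) :=
                mul_le_mul_of_nonneg_left
                  (mul_le_mul_of_nonneg_left (hpcondI1 y1) hRnn) (hq10 _ _)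
            _ = q1 x1 y1 * (p1 y1 * q1 y1 x1 / (p1 x1 * q1 x1 y1)) := by rw [mul_one]


end
end

section
/- Let d ≥ 1 be an integer, let W be a chi-squared random variable with d degrees of freedom (i.e., with density proportional to w^{d/2−1} e^{−w/2} on (0, ∞)), and let c > 0. Then E[exp(−c/W)] ≤ exp(−c/(2d)) + exp(−d/8). -/
open MeasureTheory ProbabilityTheory

noncomputable section

/-- if `W ∼ χ²_d` (the Gamma distribution with shape `d/2` and rate `1/2`)
and `c > 0`, then `E[exp(−c/W)] ≤ exp(−c/(2d)) + exp(−d/8)`. -/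
theorem chi_squared_exp_neg_inv_bound
    (d : ℕ) (hd : 1 ≤ d) (c : ℝ) (hc : 0 < c) :
    ∫ w, Real.exp (-c / w) ∂(gammaMeasure ((d : ℝ) / 2) (1 / 2))
      ≤ Real.exp (-c / (2 * d)) + Real.exp (-(d : ℝ) / 8) := by
  set a : ℝ := (d : ℝ) / 2 with ha_def
  have hd0 : (0 : ℝ) < d := by positivity
  have ha : 0 < a := by positivity
  have hr : (0 : ℝ) < 1 / 2 := by norm_num
  set μ := gammaMeasure a (1 / 2) with hμ_def
  have hprob : IsProbabilityMeasure μ := isProbabilityMeasure_gammaMeasure ha hr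
  -- a.e. positivity
  have h_ae_pos : ∀ᵐ w ∂μ, 0 < w := by
    rw [ae_iff]
    have hset : {w : ℝ | ¬ 0 < w} = Set.Iic 0 := by ext w; simp
    rw [hset, hμ_def, gammaMeasure, withDensity_apply _ measurableSet_Iic]
    have : ∫⁻ w in Set.Iic (0:ℝ), gammaPDF a (1/2) w
        = ∫⁻ w in Set.Iio (0:ℝ), gammaPDF a (1/2) w := by
      exact setLIntegral_congr (Iio_ae_eq_Iic (μ := (volume : Measure ℝ)) (a := (0:ℝ))).symm
    rw [this]
    rw [setLIntegral_congr_fun_ae measurableSet_Iio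
      (ae_of_all _ (fun x (hx : x < 0) ↦ gammaPDF_of_neg hx))]
    simp
  -- tail bound: μ (Ioi (2d)) ≤ ofReal (exp (-d/8))
  have h_tail : μ (Set.Ioi (2 * (d : ℝ))) ≤ ENNReal.ofReal (Real.exp (-(d : ℝ) / 8)) := by
    have key : ∀ w : ℝ, (Set.Ioi (2 * (d : ℝ))).indicator (gammaPDF a (1/2)) w
        ≤ gammaPDF a (1/2) w * ENNReal.ofReal (Real.exp (w / 4 - (d : ℝ) / 2)) := by
      intro w
      by_cases hw : w ∈ Set.Ioi (2 * (d : ℝ))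
      · rw [Set.indicator_of_mem hw]
        have h1 : (1 : ℝ) ≤ Real.exp (w / 4 - (d : ℝ) / 2) := by
          rw [Real.one_le_exp_iff]
          have := hw
          simp only [Set.mem_Ioi] at this
          linarith
        calc gammaPDF a (1/2) w = gammaPDF a (1/2) w * 1 := by rw [mul_one]
          _ ≤ _ := by
              gcongr
              simpa using ENNReal.ofReal_le_ofReal h1
      · rw [Set.indicator_of_notMem hw]; exact zero_le
    have heqfun : ∀ w : ℝ, gammaPDF a (1/2) w * ENNReal.ofReal (Real.exp (w / 4 - (d : ℝ) / 2))
        = ENNReal.ofReal (Real.exp (-(d:ℝ)/2) * (2:ℝ) ^ a) * gammaPDF a (1/4) w := by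
      intro w
      rcases le_or_gt 0 w with hw | hw
      · rw [gammaPDF_of_nonneg hw, gammaPDF_of_nonneg hw,
          ← ENNReal.ofReal_mul (by positivity), ← ENNReal.ofReal_mul (by positivity)]
        congr 1
        have h12 : ((1:ℝ)/2) ^ a = (2:ℝ) ^ a * ((1:ℝ)/4) ^ a := by
          rw [← Real.mul_rpow (by norm_num) (by norm_num)]; norm_num
        have hexp : Real.exp (-(1/2 * w)) * Real.exp (w / 4 - (d:ℝ)/2)
            = Real.exp (-(d:ℝ)/2) * Real.exp (-(1/4 * w)) := by
          rw [← Real.exp_add, ← Real.exp_add]; ring_nf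
        rw [h12]
        linear_combination ((2:ℝ) ^ a * ((1:ℝ)/4) ^ a / Real.Gamma a * w ^ (a-1)) * hexp
      · rw [gammaPDF_of_neg hw, gammaPDF_of_neg hw, zero_mul, mul_zero]
    calc μ (Set.Ioi (2 * (d : ℝ)))
        = ∫⁻ w, (Set.Ioi (2 * (d : ℝ))).indicator (gammaPDF a (1/2)) w := by
          rw [hμ_def, gammaMeasure, withDensity_apply _ measurableSet_Ioi,
            lintegral_indicator measurableSet_Ioi]
      _ ≤ ∫⁻ w, gammaPDF a (1/2) w * ENNReal.ofReal (Real.exp (w / 4 - (d : ℝ) / 2)) :=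
          lintegral_mono key
      _ = ∫⁻ w, ENNReal.ofReal (Real.exp (-(d:ℝ)/2) * (2:ℝ) ^ a) * gammaPDF a (1/4) w := by
          simp_rw [heqfun]
      _ = ENNReal.ofReal (Real.exp (-(d:ℝ)/2) * (2:ℝ) ^ a) := by
          rw [lintegral_const_mul _
              (show Measurable (gammaPDF a (1/4)) from
                (measurable_gammaPDFReal a (1/4)).ennreal_ofReal),
            lintegral_gammaPDF_eq_one ha (by norm_num), mul_one]
      _ ≤ ENNReal.ofReal (Real.exp (-(d : ℝ) / 8)) := by
          apply ENNReal.ofReal_le_ofReal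
          rw [Real.rpow_def_of_pos (by norm_num : (0:ℝ) < 2), ← Real.exp_add]
          apply Real.exp_le_exp.mpr
          have hlog : Real.log 2 < 0.6931471808 := Real.log_two_lt_d9
          rw [ha_def]
          nlinarith [hd0]
    -- pointwise bound
  have hbound : ∀ᵐ w ∂μ, Real.exp (-c / w)
      ≤ Real.exp (-c / (2 * d)) + (Set.Ioi (2 * (d : ℝ))).indicator (fun _ ↦ (1:ℝ)) w := by
    filter_upwards [h_ae_pos] with w hw
    by_cases hmem : w ∈ Set.Ioi (2 * (d : ℝ))
    · rw [Set.indicator_of_mem hmem]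
      have : Real.exp (-c / w) ≤ 1 := by
        apply Real.exp_le_one_iff.mpr
        apply div_nonpos_of_nonpos_of_nonneg <;> linarith
      nlinarith [Real.exp_pos (-c / (2 * (d:ℝ)))]
    · rw [Set.indicator_of_notMem hmem, add_zero]
      apply Real.exp_le_exp.mpr
      have hw2 : w ≤ 2 * d := by simpa using hmem
      rw [neg_div, neg_div, neg_le_neg_iff]
      gcongr
  have hint_rhs : Integrable (fun w ↦ Real.exp (-c / (2 * d))
      + (Set.Ioi (2 * (d : ℝ))).indicator (fun _ ↦ (1:ℝ)) w) μ :=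
    (integrable_const _).add ((integrable_const (1:ℝ)).indicator measurableSet_Ioi)
  have hint_lhs : Integrable (fun w ↦ Real.exp (-c / w)) μ := by
    apply Integrable.mono' (integrable_const (1:ℝ))
    · exact (Real.measurable_exp.comp ((measurable_const.div measurable_id))).aestronglyMeasurable
    · filter_upwards [h_ae_pos] with w hw
      rw [Real.norm_eq_abs, abs_of_pos (Real.exp_pos _)]
      apply Real.exp_le_one_iff.mpr
      apply div_nonpos_of_nonpos_of_nonneg <;> linarith
  calc ∫ w, Real.exp (-c / w) ∂μ
      ≤ ∫ w, (Real.exp (-c / (2 * d))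
          + (Set.Ioi (2 * (d : ℝ))).indicator (fun _ ↦ (1:ℝ)) w) ∂μ :=
        integral_mono_ae hint_lhs hint_rhs hbound
    _ = Real.exp (-c / (2 * d)) + (μ (Set.Ioi (2 * (d : ℝ)))).toReal := by
        rw [integral_add (integrable_const _)
          ((integrable_const (1:ℝ)).indicator measurableSet_Ioi),
          integral_const, integral_indicator_const _ measurableSet_Ioi]
        simp [measure_univ, measureReal_def]
    _ ≤ Real.exp (-c / (2 * d)) + Real.exp (-(d : ℝ) / 8) := by
        gcongr
        calc (μ (Set.Ioi (2 * (d : ℝ)))).toReal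
            ≤ (ENNReal.ofReal (Real.exp (-(d : ℝ) / 8))).toReal :=
              ENNReal.toReal_mono ENNReal.ofReal_ne_top h_tail
          _ = Real.exp (-(d : ℝ) / 8) := ENNReal.toReal_ofReal (Real.exp_pos _).le
end
end

section
/- Let U : ℝ^d → ℝ be twice continuously differentiable and λ-strongly convex with λ > 0, with unique global minimizer x* ∈ ℝ^d and ∫ exp(−U) < ∞, and let X have density proportional to exp(−U). Then ‖X − x*‖² is stochastically dominated by λ^{−1}χ²_d: for every t ≥ 0, Pr(‖X − x*‖² > t) ≤ Pr(W > λ t), where W is a chi-squared random variable with d degrees of freedom. -/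
open MeasureTheory ProbabilityTheory

noncomputable section

section Aux

open Set Metric
open scoped ENNReal RealInnerProductSpace

/-- Chebyshev-type correlation inequality for likelihood-ratio ordered functions. -/
lemma aux_cheb {α : Type*} [MeasurableSpace α] (μ : Measure α)
    (f g : α → ℝ≥0∞) (hf : Measurable f) (hg : Measurable g)
    {A : Set α} (hA : MeasurableSet A)
    (h : ∀ x ∈ A, ∀ y ∉ A, f x * g y ≤ g x * f y) :
    (∫⁻ x in A, f x ∂μ) * ∫⁻ y, g y ∂μ ≤ (∫⁻ x in A, g x ∂μ) * ∫⁻ y, f y ∂μ := by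
  have expand : ∀ (p q : α → ℝ≥0∞), Measurable p → Measurable q →
      (∫⁻ x, ∫⁻ y, (A.indicator p x * q y + A.indicator p y * q x) ∂μ ∂μ)
        = 2 * ((∫⁻ x in A, p x ∂μ) * ∫⁻ y, q y ∂μ) := by
    intro p q hp hq
    have h1 : ∀ x, (∫⁻ y, (A.indicator p x * q y + A.indicator p y * q x) ∂μ)
        = A.indicator p x * (∫⁻ y, q y ∂μ) + (∫⁻ y, A.indicator p y ∂μ) * q x := by
      intro x
      rw [lintegral_add_left (hq.const_mul _), lintegral_const_mul _ hq,
        lintegral_mul_const'' _ (hp.indicator hA).aemeasurable]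
    simp only [h1]
    rw [lintegral_add_left ((hp.indicator hA).mul_const _),
      lintegral_mul_const'' _ (hp.indicator hA).aemeasurable,
      lintegral_const_mul _ hq, lintegral_indicator hA, two_mul]
  have hmono : (∫⁻ x, ∫⁻ y, (A.indicator f x * g y + A.indicator f y * g x) ∂μ ∂μ)
      ≤ ∫⁻ x, ∫⁻ y, (A.indicator g x * f y + A.indicator g y * f x) ∂μ ∂μ := by
    refine lintegral_mono fun x => lintegral_mono fun y => ?_
    by_cases hx : x ∈ A <;> by_cases hy : y ∈ A
    · rw [indicator_of_mem hx, indicator_of_mem hy, indicator_of_mem hx, indicator_of_mem hy]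
      exact le_of_eq (by ring)
    · rw [indicator_of_mem hx, indicator_of_notMem hy, indicator_of_mem hx,
        indicator_of_notMem hy]
      simpa using h x hx y hy
    · rw [indicator_of_notMem hx, indicator_of_mem hy, indicator_of_notMem hx,
        indicator_of_mem hy]
      simpa using h y hy x hx
    · simp [indicator_of_notMem hx, indicator_of_notMem hy]
  rw [expand f g hf hg, expand g f hg hf] at hmono
  exact (ENNReal.mul_le_mul_iff_right (by norm_num) (by norm_num)).mp hmono

/-- The function `r ↦ U (x* + r u) - (λ/2) r²` is nondecreasing on `[0, ∞)` for a
λ-strongly convex `U` minimized at `x*`, along a unit direction `u`. -/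
lemma aux_psi_mono {d : ℕ} (U : EuclideanSpace ℝ (Fin d) → ℝ) (lam : ℝ)
    (hC2 : ContDiff ℝ 2 U)
    (hconv : ConvexOn ℝ Set.univ (fun x => U x - lam / 2 * ‖x‖ ^ 2))
    (xstar : EuclideanSpace ℝ (Fin d)) (hmin : ∀ y, U xstar ≤ U y)
    (u : EuclideanSpace ℝ (Fin d)) (hu : ‖u‖ = 1) :
    ∀ r s : ℝ, 0 ≤ s → s ≤ r →
      U (xstar + s • u) - lam / 2 * s ^ 2 ≤ U (xstar + r • u) - lam / 2 * r ^ 2 := by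
  set ψ : ℝ → ℝ := fun r => U (xstar + r • u) - lam / 2 * r ^ 2 with hψdef
  have hψ_eq : ∀ r : ℝ, ψ r = (fun x => U x - lam / 2 * ‖x‖ ^ 2) (xstar + r • u)
      + (lam / 2 * ‖xstar‖ ^ 2 + (lam * ⟪xstar, u⟫) * r) := by
    intro r
    have hn : ‖xstar + r • u‖ ^ 2 = ‖xstar‖ ^ 2 + 2 * ⟪xstar, r • u⟫ + ‖r • u‖ ^ 2 :=
      norm_add_sq_real _ _
    have h2 : ⟪xstar, r • u⟫ = r * ⟪xstar, u⟫ := real_inner_smul_right _ _ _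
    have h3 : ‖r • u‖ ^ 2 = r ^ 2 := by
      rw [norm_smul, hu, mul_one, Real.norm_eq_abs, sq_abs]
    simp only [hψdef]
    rw [hn, h2, h3]; ring
  have hψconv : ConvexOn ℝ univ ψ := by
    have hmap : ∀ r : ℝ, (AffineMap.lineMap xstar (xstar + u) : ℝ →ᵃ[ℝ] _) r = xstar + r • u := by
      intro r
      rw [AffineMap.lineMap_apply_module]
      module
    have haff : ConvexOn ℝ univ
        (fun r : ℝ => U (xstar + r • u) - lam / 2 * ‖xstar + r • u‖ ^ 2) := by
      have h := hconv.comp_affineMap (AffineMap.lineMap xstar (xstar + u) : ℝ →ᵃ[ℝ] _)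
      have hpre : ((AffineMap.lineMap xstar (xstar + u) : ℝ →ᵃ[ℝ] _) ⁻¹' univ) = univ :=
        preimage_univ
      rw [hpre] at h
      have hfeq : ((fun x => U x - lam / 2 * ‖x‖ ^ 2) ∘
          (AffineMap.lineMap xstar (xstar + u) : ℝ →ᵃ[ℝ] _)) =
          (fun r : ℝ => U (xstar + r • u) - lam / 2 * ‖xstar + r • u‖ ^ 2) := by
        funext r
        simp only [Function.comp_apply, hmap r]
      rw [hfeq] at h
      exact h
    have hlin : ConvexOn ℝ univ (fun r : ℝ => lam / 2 * ‖xstar‖ ^ 2 + (lam * ⟪xstar, u⟫) * r) := by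
      refine ⟨convex_univ, fun x _ y _ a b ha hb hab => le_of_eq ?_⟩
      simp only [smul_eq_mul]
      rw [show b = 1 - a by linarith]
      ring
    have hsum := haff.add hlin
    have hfeq2 : ψ = (fun r : ℝ => U (xstar + r • u) - lam / 2 * ‖xstar + r • u‖ ^ 2)
        + (fun r : ℝ => lam / 2 * ‖xstar‖ ^ 2 + (lam * ⟪xstar, u⟫) * r) := funext fun r => hψ_eq r
    rw [hfeq2]
    exact hsum
  have hDiff : Differentiable ℝ U := hC2.differentiable two_ne_zero
  have hlm : IsLocalMin U xstar := Filter.Eventually.of_forall hmin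
  have hgrad : fderiv ℝ U xstar = 0 := hlm.fderiv_eq_zero
  have hcurve : HasDerivAt (fun r : ℝ => xstar + r • u) u 0 := by
    simpa using ((hasDerivAt_id (0 : ℝ)).smul_const u).const_add xstar
  have hU0 : HasDerivAt (fun r : ℝ => U (xstar + r • u)) 0 0 := by
    have h1 : HasFDerivAt U (fderiv ℝ U xstar) (xstar + (0 : ℝ) • u) := by
      rw [zero_smul, add_zero]; exact (hDiff xstar).hasFDerivAt
    have h2 := h1.comp_hasDerivAt 0 hcurve
    rw [hgrad, ContinuousLinearMap.zero_apply] at h2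
    exact h2
  have hq0 : HasDerivAt (fun r : ℝ => lam / 2 * r ^ 2) 0 0 := by
    simpa using (hasDerivAt_pow 2 (0 : ℝ)).const_mul (lam / 2)
  have hψ0 : HasDerivAt ψ 0 0 := by
    have h3 := hU0.sub hq0
    rw [sub_zero] at h3
    exact h3
  have h0le : ∀ r : ℝ, 0 < r → ψ 0 ≤ ψ r := by
    intro r hr
    have hs := hψconv.le_slope_of_hasDerivAt (mem_univ (0 : ℝ)) (mem_univ r) hr hψ0
    rw [slope_def_field] at hs
    rcases div_nonneg_iff.mp hs with ⟨h1, _⟩ | ⟨_, h2⟩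
    · linarith
    · linarith
  intro r s hs hsr
  rcases eq_or_lt_of_le hsr with rfl | hlt
  · exact le_rfl
  rcases eq_or_lt_of_le hs with rfl | hs0
  · exact h0le r hlt
  have hr : 0 < r := lt_trans hs0 hlt
  have ha : 0 ≤ (r - s) / r := div_nonneg (by linarith) hr.le
  have hb : 0 ≤ s / r := by positivity
  have hab : (r - s) / r + s / r = 1 := by field_simp; ring
  have hcomb := hψconv.2 (mem_univ (0 : ℝ)) (mem_univ r) ha hb hab
  rw [smul_eq_mul, smul_eq_mul, mul_zero, zero_add, div_mul_cancel₀ _ (ne_of_gt hr)] at hcomb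
  have h0r := h0le r hr
  have : ψ s ≤ ψ r := by
    calc ψ s ≤ (r - s) / r * ψ 0 + s / r * ψ r := by
          simpa [smul_eq_mul] using hcomb
      _ ≤ (r - s) / r * ψ r + s / r * ψ r := by
          have := mul_le_mul_of_nonneg_left h0r ha
          linarith
      _ = ψ r := by field_simp; ring
  exact this

/-- Change-of-variables identity relating the radial Gaussian integral to the Gamma measure. -/
lemma aux_gauss_tail (d : ℕ) (hd : 1 ≤ d) (lam : ℝ) (hlam : 0 < lam) (s : ℝ) (hs : 0 ≤ s) :
    (∫⁻ x in Set.Ioi s, ENNReal.ofReal (x ^ (d - 1) * Real.exp (-(lam * x ^ 2) / 2)))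
      = ENNReal.ofReal (Real.Gamma ((d : ℝ) / 2) * ((1/2 : ℝ) ^ ((d : ℝ) / 2))⁻¹
          * (lam ^ ((d : ℝ) / 2))⁻¹ / 2)
        * (gammaMeasure ((d : ℝ) / 2) (1 / 2)) (Set.Ioi (lam * s ^ 2)) := by
  have hGpos : 0 < Real.Gamma ((d : ℝ) / 2) := Real.Gamma_pos_of_pos (by positivity)
  have hP2 : (0:ℝ) < (1/2 : ℝ) ^ ((d : ℝ) / 2) := Real.rpow_pos_of_pos (by norm_num) _
  have hPL : (0:ℝ) < lam ^ ((d : ℝ) / 2) := Real.rpow_pos_of_pos hlam _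
  set c : ℝ := Real.Gamma ((d : ℝ) / 2) * ((1/2 : ℝ) ^ ((d : ℝ) / 2))⁻¹
      * (lam ^ ((d : ℝ) / 2))⁻¹ / 2 with hc
  have hcpos : 0 < c := by rw [hc]; positivity
  have himg : (fun x : ℝ => lam * x ^ 2) '' Ioi s = Ioi (lam * s ^ 2) := by
    ext w
    constructor
    · rintro ⟨x, hx, rfl⟩
      have hx' : s < x := hx
      have h1 : s ^ 2 < x ^ 2 := by nlinarith
      exact mem_Ioi.mpr ((mul_lt_mul_iff_right₀ hlam).mpr h1)
    · intro hw
      have hw' : lam * s ^ 2 < w := hw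
      have hwpos : (0:ℝ) ≤ w / lam := div_nonneg (by nlinarith) hlam.le
      refine ⟨Real.sqrt (w / lam), ?_, ?_⟩
      · have h1 : s ^ 2 < w / lam := (lt_div_iff₀ hlam).mpr (by linarith [mul_comm lam (s^2)])
        have := Real.lt_sqrt (x := s) (y := w / lam) hs
        exact mem_Ioi.mpr (this.mpr h1)
      · simp only []
        rw [Real.sq_sqrt hwpos, mul_div_cancel₀ _ hlam.ne']
  have hderiv : ∀ x ∈ Ioi s, HasFDerivWithinAt (fun x : ℝ => lam * x ^ 2)
      ((1 : ℝ →L[ℝ] ℝ).smulRight (2 * lam * x)) (Ioi s) x := by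
    intro x _
    have h1 : HasDerivAt (fun x : ℝ => lam * x ^ 2) (2 * lam * x) x := by
      have := (hasDerivAt_pow 2 x).const_mul lam
      simpa [mul_comm, mul_assoc, mul_left_comm] using this
    exact h1.hasDerivWithinAt.hasFDerivWithinAt
  have hinj : InjOn (fun x : ℝ => lam * x ^ 2) (Ioi s) := by
    intro x hx y hy hxy
    have hx0 : 0 < x := lt_of_le_of_lt hs hx
    have hy0 : 0 < y := lt_of_le_of_lt hs hy
    have h2 : x ^ 2 = y ^ 2 := mul_left_cancel₀ hlam.ne' hxy
    rw [← Real.sqrt_sq hx0.le, ← Real.sqrt_sq hy0.le, h2]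
  have hcv := lintegral_image_eq_lintegral_abs_det_fderiv_mul volume measurableSet_Ioi hderiv hinj
    (fun w => ENNReal.ofReal c * gammaPDF ((d : ℝ) / 2) (1/2) w)
  rw [himg] at hcv
  have hrhs : ENNReal.ofReal c * (gammaMeasure ((d : ℝ) / 2) (1 / 2)) (Set.Ioi (lam * s ^ 2))
      = ∫⁻ w in Ioi (lam * s ^ 2), ENNReal.ofReal c * gammaPDF ((d : ℝ) / 2) (1/2) w := by
    rw [gammaMeasure, withDensity_apply _ measurableSet_Ioi,
      lintegral_const_mul' _ _ ENNReal.ofReal_ne_top]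
  rw [hc] at hrhs ⊢
  rw [hrhs, hcv]
  refine setLIntegral_congr_fun measurableSet_Ioi (fun x hx => ?_)
  have hx0 : 0 < x := lt_of_le_of_lt hs hx
  have hdet : ((1 : ℝ →L[ℝ] ℝ).smulRight (2 * lam * x)).det = 2 * lam * x := by rw [ContinuousLinearMap.det_smulRight]; simp
  rw [hdet, abs_of_pos (by positivity)]
  rw [gammaPDF_of_nonneg (by positivity)]
  rw [← ENNReal.ofReal_mul (by positivity), ← ENNReal.ofReal_mul (by positivity)]
  congr 1
  have hexp : Real.exp (-(1/2 * (lam * x ^ 2))) = Real.exp (-(lam * x ^ 2) / 2) := by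
    congr 1; ring
  have hsplit : (lam * x ^ 2) ^ ((d : ℝ) / 2 - 1)
      = (lam ^ ((d : ℝ) / 2) / lam) * (x ^ (d - 1) / x) := by
    rw [Real.mul_rpow hlam.le (sq_nonneg x)]
    have hcast : ((d - 1 : ℕ) : ℝ) = (d : ℝ) - 1 := by
      rw [Nat.cast_sub hd, Nat.cast_one]
    congr 1
    · rw [Real.rpow_sub hlam, Real.rpow_one]
    · rw [← Real.rpow_natCast x 2, ← Real.rpow_mul hx0.le, ← Real.rpow_natCast x (d - 1)]
      rw [show ((2:ℕ):ℝ) * ((d:ℝ)/2 - 1) = ((d - 1 : ℕ) : ℝ) - 1 by rw [hcast]; push_cast; ring]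
      rw [Real.rpow_sub hx0, Real.rpow_one]
  rw [hexp, hsplit, hc]
  set G : ℝ := Real.Gamma ((d : ℝ) / 2) with hG
  set P2 : ℝ := (1/2 : ℝ) ^ ((d : ℝ) / 2) with hp2d
  set PL : ℝ := lam ^ ((d : ℝ) / 2) with hpld
  clear_value G P2 PL
  field_simp

lemma aux_nontriv {d : ℕ} (hd : 1 ≤ d) : Nontrivial (EuclideanSpace ℝ (Fin d)) := by
  refine ⟨EuclideanSpace.single (⟨0, hd⟩ : Fin d) (1:ℝ), 0, fun h => ?_⟩
  have : ‖EuclideanSpace.single (⟨0, hd⟩ : Fin d) (1:ℝ)‖ = 1 := by simp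
  rw [h] at this; simp at this

/-- Polar-coordinate decomposition of a Lebesgue integral on Euclidean space. -/
lemma aux_polar {d : ℕ} (hd : 1 ≤ d) (P : EuclideanSpace ℝ (Fin d) → ℝ≥0∞) (hP : Measurable P) :
    ∫⁻ v, P v = ∫⁻ u : sphere (0 : EuclideanSpace ℝ (Fin d)) 1,
      ∫⁻ r : Ioi (0:ℝ), P ((r : ℝ) • (u : EuclideanSpace ℝ (Fin d))) ∂(Measure.volumeIoiPow (d - 1))
      ∂(volume : Measure (EuclideanSpace ℝ (Fin d))).toSphere := by
  haveI : Nontrivial (EuclideanSpace ℝ (Fin d)) := aux_nontriv hd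
  have hmp :=
    (volume : Measure (EuclideanSpace ℝ (Fin d))).measurePreserving_homeomorphUnitSphereProd
  rw [finrank_euclideanSpace_fin] at hmp
  have hc : Measurable fun p : sphere (0 : EuclideanSpace ℝ (Fin d)) 1 × Ioi (0:ℝ) =>
      ((p.2 : ℝ) • (p.1 : EuclideanSpace ℝ (Fin d))) := by fun_prop
  have hcont : Measurable fun p : sphere (0 : EuclideanSpace ℝ (Fin d)) 1 × Ioi (0:ℝ) =>
      P ((p.2 : ℝ) • (p.1 : EuclideanSpace ℝ (Fin d))) := hP.comp hc
  calc ∫⁻ v, P v = ∫⁻ v in ({0}ᶜ : Set (EuclideanSpace ℝ (Fin d))), P v := by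
        rw [MeasureTheory.restrict_compl_singleton]
    _ = ∫⁻ x : ({0}ᶜ : Set (EuclideanSpace ℝ (Fin d))), P x.1 ∂(volume.comap Subtype.val) :=
        (lintegral_subtype_comap (measurableSet_singleton 0).compl P).symm
    _ = ∫⁻ p : sphere (0 : EuclideanSpace ℝ (Fin d)) 1 × Ioi (0:ℝ),
          P ((p.2 : ℝ) • (p.1 : EuclideanSpace ℝ (Fin d)))
          ∂((volume : Measure (EuclideanSpace ℝ (Fin d))).toSphere.prod
            (Measure.volumeIoiPow (d - 1))) := by
        rw [← hmp.lintegral_comp hcont]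
        refine lintegral_congr fun x => ?_
        congr 1
        simp only [homeomorphUnitSphereProd_apply_fst_coe, homeomorphUnitSphereProd_apply_snd_coe]
        rw [smul_inv_smul₀ (norm_ne_zero_iff.2 x.2)]
    _ = _ := by exact lintegral_prod _ hcont.aemeasurable

lemma aux_gamma_Ioi_zero (d : ℕ) (hd : 1 ≤ d) :
    (gammaMeasure ((d:ℝ)/2) (1/2)) (Set.Ioi (0:ℝ)) = 1 := by
  haveI : IsProbabilityMeasure (gammaMeasure ((d:ℝ)/2) (1/2)) :=
    isProbabilityMeasure_gammaMeasure
      (div_pos (lt_of_lt_of_le one_pos (by exact_mod_cast hd)) two_pos) (by norm_num)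
  have hIic : (gammaMeasure ((d:ℝ)/2) (1/2)) (Set.Iic (0:ℝ)) = 0 := by
    rw [gammaMeasure, withDensity_apply _ measurableSet_Iic,
      ← Measure.restrict_congr_set Iio_ae_eq_Iic]
    exact lintegral_gammaPDF_of_nonpos le_rfl
  have hcompl := measure_compl (μ := gammaMeasure ((d:ℝ)/2) (1/2))
    (measurableSet_Iic (a := (0:ℝ))) (measure_ne_top _ _)
  rw [compl_Iic, hIic, measure_univ] at hcompl
  simpa using hcompl

end Aux
section Main
open Set Metric
open scoped ENNReal

/-- for `X ∼ π ∝ exp(−U)` with `U` λ-strongly convex with minimizer `x*`,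
`‖X − x*‖²` is stochastically dominated by `λ⁻¹ χ²_d`. -/
theorem sq_dist_stochastically_dominated_by_chi_squared
    (d : ℕ) (hd : 1 ≤ d)
    (U : EuclideanSpace ℝ (Fin d) → ℝ) (lam : ℝ) (hlam : 0 < lam)
    (hC2 : ContDiff ℝ 2 U)
    (hconv : ConvexOn ℝ Set.univ (fun x => U x - lam / 2 * ‖x‖ ^ 2))
    (xstar : EuclideanSpace ℝ (Fin d)) (hmin : ∀ y, U xstar ≤ U y)
    (hint : Integrable fun x : EuclideanSpace ℝ (Fin d) => Real.exp (-U x)) :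
    ∀ t : ℝ, 0 ≤ t →
      (volume.withDensity fun x =>
          ENNReal.ofReal (Real.exp (-U x) / ∫ y, Real.exp (-U y)))
        {x | t < ‖x - xstar‖ ^ 2}
      ≤ (gammaMeasure ((d : ℝ) / 2) (1 / 2)) {w | lam * t < w} := by
  intro t ht
  haveI : Nontrivial (EuclideanSpace ℝ (Fin d)) := aux_nontriv hd
  have hUcont : Continuous U := hC2.continuous
  set Z : ℝ := ∫ y, Real.exp (-U y) with hZdef
  have hZpos : 0 < Z := by
    rw [hZdef, integral_pos_iff_support_of_nonneg (fun x => (Real.exp_pos _).le) hint]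
    have hsupp : (Function.support fun x : EuclideanSpace ℝ (Fin d) => Real.exp (-U x))
        = Set.univ := by
      ext x; simp [Function.support, (Real.exp_pos (-U x)).ne']
    rw [hsupp]
    exact isOpen_univ.measure_pos volume Set.univ_nonempty
  set F : EuclideanSpace ℝ (Fin d) → ℝ≥0∞ := fun x => ENNReal.ofReal (Real.exp (-U x)) with hF
  have hFmeas : Measurable F := (Real.continuous_exp.comp hUcont.neg).measurable.ennreal_ofReal
  have hIF : ∫⁻ x, F x = ENNReal.ofReal Z :=
    (ofReal_integral_eq_lintegral_ofReal hint
      (Filter.Eventually.of_forall fun x => (Real.exp_pos _).le)).symm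
  set A : Set (EuclideanSpace ℝ (Fin d)) := {x | t < ‖x - xstar‖ ^ 2} with hAdef
  have hA : MeasurableSet A :=
    measurableSet_lt measurable_const
      (((continuous_id.sub continuous_const).norm.pow 2).measurable)
  haveI hPM : IsProbabilityMeasure (gammaMeasure ((d : ℝ) / 2) (1 / 2)) :=
    isProbabilityMeasure_gammaMeasure
      (div_pos (lt_of_lt_of_le one_pos (by exact_mod_cast hd)) two_pos) (by norm_num)
  set q : ℝ≥0∞ := (gammaMeasure ((d : ℝ) / 2) (1 / 2)) {w | lam * t < w} with hqdef
  have hq_ne_top : q ≠ ⊤ := by rw [hqdef]; exact measure_ne_top _ _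
  -- the key inequality
  have key : ∫⁻ x in A, F x ≤ q * ∫⁻ x, F x := by
    set Gt : EuclideanSpace ℝ (Fin d) → ℝ≥0∞ :=
      fun v => ENNReal.ofReal (Real.exp (-U (xstar + v))) with hGt
    have hGtm : Measurable Gt :=
      (Real.continuous_exp.comp
        (hUcont.comp (continuous_const.add continuous_id)).neg).measurable.ennreal_ofReal
    set A' : Set (EuclideanSpace ℝ (Fin d)) := {v | t < ‖v‖ ^ 2} with hA'def
    have hA'm : MeasurableSet A' :=
      measurableSet_lt measurable_const ((continuous_norm.pow 2).measurable)
    have hxsub : ∀ x : EuclideanSpace ℝ (Fin d), xstar + (x - xstar) = x := fun x => by abel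
    have htrans1 : ∫⁻ x in A, F x = ∫⁻ v, A'.indicator Gt v := by
      rw [← lintegral_indicator hA]
      have hpt : ∀ x, A.indicator F x = A'.indicator Gt (x - xstar) := by
        intro x
        by_cases hx : x ∈ A
        · rw [Set.indicator_of_mem hx, Set.indicator_of_mem (by exact hx)]
          simp only [hF, hGt, hxsub x]
        · rw [Set.indicator_of_notMem hx, Set.indicator_of_notMem (by exact hx)]
      simp only [hpt]
      exact lintegral_sub_right_eq_self (fun v => A'.indicator Gt v) xstar
    have htrans2 : ∫⁻ x, F x = ∫⁻ v, Gt v := by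
      have hpt : ∀ x, F x = Gt (x - xstar) := fun x => by simp only [hF, hGt, hxsub x]
      simp only [hpt]
      exact lintegral_sub_right_eq_self Gt xstar
    set ν := Measure.volumeIoiPow (d - 1) with hν
    set σm := (volume : Measure (EuclideanSpace ℝ (Fin d))).toSphere with hσ
    set B : Set (Set.Ioi (0:ℝ)) := {r : Set.Ioi (0:ℝ) | t < (r : ℝ) ^ 2} with hBdef
    have hBm : MeasurableSet B :=
      measurableSet_lt measurable_const (measurable_subtype_coe.pow_const 2)
    have hpolar1 := aux_polar hd (A'.indicator Gt) (hGtm.indicator hA'm)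
    have hpolar2 := aux_polar hd Gt hGtm
    have hind : ∀ (u : Metric.sphere (0 : EuclideanSpace ℝ (Fin d)) 1) (r : Set.Ioi (0:ℝ)),
        A'.indicator Gt ((r : ℝ) • (u : EuclideanSpace ℝ (Fin d)))
          = B.indicator (fun r' : Set.Ioi (0:ℝ) =>
              Gt ((r' : ℝ) • (u : EuclideanSpace ℝ (Fin d)))) r := by
      intro u r
      have hnorm : ‖(r : ℝ) • (u : EuclideanSpace ℝ (Fin d))‖ ^ 2 = (r : ℝ) ^ 2 := by
        rw [norm_smul, mem_sphere_zero_iff_norm.mp u.2, mul_one, Real.norm_eq_abs, sq_abs]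
      by_cases hr : t < (r : ℝ) ^ 2
      · rw [Set.indicator_of_mem (show r ∈ B by simp only [hBdef, Set.mem_setOf_eq]; exact hr),
          Set.indicator_of_mem (show ((r : ℝ) • (u : EuclideanSpace ℝ (Fin d))) ∈ A' by
            simp only [hA'def, Set.mem_setOf_eq, hnorm]; exact hr)]
      · rw [Set.indicator_of_notMem
            (show r ∉ B by simp only [hBdef, Set.mem_setOf_eq]; exact hr),
          Set.indicator_of_notMem (show ((r : ℝ) • (u : EuclideanSpace ℝ (Fin d))) ∉ A' by
            simp only [hA'def, Set.mem_setOf_eq, hnorm]; exact hr)]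
    have hpolar1' : ∫⁻ v, A'.indicator Gt v
        = ∫⁻ u : Metric.sphere (0 : EuclideanSpace ℝ (Fin d)) 1,
            ∫⁻ r in B, Gt ((r : ℝ) • (u : EuclideanSpace ℝ (Fin d))) ∂ν ∂σm := by
      rw [hpolar1]
      refine lintegral_congr fun u => ?_
      rw [← lintegral_indicator hBm]
      exact lintegral_congr fun r => hind u r
    -- Gaussian radial facts
    have hGpos : 0 < Real.Gamma ((d : ℝ) / 2) :=
      Real.Gamma_pos_of_pos (div_pos (lt_of_lt_of_le one_pos (by exact_mod_cast hd)) two_pos)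
    have hP2 : (0:ℝ) < (1/2 : ℝ) ^ ((d : ℝ) / 2) := Real.rpow_pos_of_pos (by norm_num) _
    have hPL : (0:ℝ) < lam ^ ((d : ℝ) / 2) := Real.rpow_pos_of_pos hlam _
    set c : ℝ := Real.Gamma ((d : ℝ) / 2) * ((1/2 : ℝ) ^ ((d : ℝ) / 2))⁻¹
        * (lam ^ ((d : ℝ) / 2))⁻¹ / 2 with hc
    have hcpos : 0 < c := by rw [hc]; positivity
    set Wg : ℝ → ℝ≥0∞ := fun x => ENNReal.ofReal (Real.exp (-(lam * x ^ 2) / 2)) with hWg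
    have hWgm : Measurable Wg := by
      apply Measurable.ennreal_ofReal
      exact (Real.continuous_exp.comp
        ((continuous_const.mul (continuous_pow 2)).neg.div_const 2)).measurable
    have hWgm' : Measurable fun r : Set.Ioi (0:ℝ) => Wg r := hWgm.comp measurable_subtype_coe
    have hdens : Measurable fun r : Set.Ioi (0:ℝ) => ENNReal.ofReal ((r : ℝ) ^ (d - 1)) :=
      (measurable_subtype_coe.pow_const _).ennreal_ofReal
    have hunfold : ∀ (W : ℝ → ℝ≥0∞), Measurable W →
        (∫⁻ r : Set.Ioi (0:ℝ), W r ∂ν)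
          = ∫⁻ x in Set.Ioi (0:ℝ), ENNReal.ofReal (x ^ (d - 1)) * W x := by
      intro W hW
      have hWc : Measurable fun r : Set.Ioi (0:ℝ) => W (r : ℝ) := hW.comp measurable_subtype_coe
      rw [hν, Measure.volumeIoiPow, lintegral_withDensity_eq_lintegral_mul _ hdens hWc]
      simp only [Pi.mul_apply]
      exact lintegral_subtype_comap measurableSet_Ioi
        (fun x => ENNReal.ofReal (x ^ (d - 1)) * W x)
    have himgB : (Subtype.val '' B : Set ℝ) = Set.Ioi (Real.sqrt t) := by
      ext x
      constructor
      · rintro ⟨⟨y, hy0⟩, hyB, rfl⟩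
        exact Set.mem_Ioi.mpr ((Real.sqrt_lt' hy0).mpr hyB)
      · intro hx
        have hx0 : 0 < x := lt_of_le_of_lt (Real.sqrt_nonneg t) hx
        exact ⟨⟨x, hx0⟩, (Real.sqrt_lt' hx0).mp hx, rfl⟩
    have hunfoldB : ∀ (W : ℝ → ℝ≥0∞), Measurable W →
        (∫⁻ r in B, W r ∂ν)
          = ∫⁻ x in Set.Ioi (Real.sqrt t), ENNReal.ofReal (x ^ (d - 1)) * W x := by
      intro W hW
      have hWc : Measurable fun r : Set.Ioi (0:ℝ) => W (r : ℝ) := hW.comp measurable_subtype_coe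
      rw [hν, Measure.volumeIoiPow, restrict_withDensity hBm,
        lintegral_withDensity_eq_lintegral_mul _ hdens hWc]
      simp only [Pi.mul_apply]
      rw [setLIntegral_subtype measurableSet_Ioi B
          (fun x => ENNReal.ofReal (x ^ (d - 1)) * W x), himgB]
    have hmerge : ∀ s : ℝ, 0 ≤ s →
        (∫⁻ x in Set.Ioi s, ENNReal.ofReal (x ^ (d - 1)) * Wg x)
          = ∫⁻ x in Set.Ioi s, ENNReal.ofReal (x ^ (d - 1) * Real.exp (-(lam * x ^ 2) / 2)) := by
      intro s hs
      refine setLIntegral_congr_fun measurableSet_Ioi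
        (fun x hx => ?_)
      have hx0 : 0 ≤ x := le_of_lt (lt_of_le_of_lt hs hx)
      rw [hWg, ← ENNReal.ofReal_mul (pow_nonneg hx0 _)]
    have hCfull : (∫⁻ r : Set.Ioi (0:ℝ), Wg r ∂ν) = ENNReal.ofReal c := by
      rw [hunfold Wg hWgm, hmerge 0 le_rfl, aux_gauss_tail d hd lam hlam 0 le_rfl]
      rw [show lam * (0:ℝ) ^ 2 = 0 by ring, aux_gamma_Ioi_zero d hd, mul_one, hc]
    have hCtail : (∫⁻ r in B, Wg r ∂ν) = ENNReal.ofReal c * q := by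
      rw [hunfoldB Wg hWgm, hmerge _ (Real.sqrt_nonneg t),
        aux_gauss_tail d hd lam hlam _ (Real.sqrt_nonneg t), Real.sq_sqrt ht, hc, hqdef]
      rfl
    -- per-direction comparison
    have hperdir : ∀ u : Metric.sphere (0 : EuclideanSpace ℝ (Fin d)) 1,
        (∫⁻ r in B, Gt ((r : ℝ) • (u : EuclideanSpace ℝ (Fin d))) ∂ν)
          ≤ q * ∫⁻ r : Set.Ioi (0:ℝ), Gt ((r : ℝ) • (u : EuclideanSpace ℝ (Fin d))) ∂ν := by
      intro u
      have hu : ‖(u : EuclideanSpace ℝ (Fin d))‖ = 1 := mem_sphere_zero_iff_norm.mp u.2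
      have mlr := aux_psi_mono U lam hC2 hconv xstar hmin u hu
      set fdir : Set.Ioi (0:ℝ) → ℝ≥0∞ :=
        fun r => Gt ((r : ℝ) • (u : EuclideanSpace ℝ (Fin d))) with hfdir
      have hfm : Measurable fdir :=
        hGtm.comp (continuous_subtype_val.smul continuous_const).measurable
      have hmlr : ∀ x ∈ B, ∀ y ∉ B,
          fdir x * (fun r : Set.Ioi (0:ℝ) => Wg r) y
            ≤ (fun r : Set.Ioi (0:ℝ) => Wg r) x * fdir y := by
        intro x hx y hy
        have hx2 : t < (x : ℝ) ^ 2 := hx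
        have hy2 : (y : ℝ) ^ 2 ≤ t := not_lt.mp hy
        have hy0 : 0 < (y : ℝ) := y.2
        have hx0 : 0 < (x : ℝ) := x.2
        have hyx : (y : ℝ) ≤ (x : ℝ) := by nlinarith
        have hball := mlr (x : ℝ) (y : ℝ) hy0.le hyx
        simp only [hfdir, hGt, hWg]
        rw [← ENNReal.ofReal_mul (Real.exp_nonneg _), ← ENNReal.ofReal_mul (Real.exp_nonneg _),
          ← Real.exp_add, ← Real.exp_add]
        exact ENNReal.ofReal_le_ofReal (Real.exp_le_exp.mpr (by linarith))
      have hch := aux_cheb ν fdir (fun r : Set.Ioi (0:ℝ) => Wg r) hfm hWgm' hBm hmlr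
      rw [hCfull, hCtail] at hch
      rw [show (ENNReal.ofReal c * q) * (∫⁻ r : Set.Ioi (0:ℝ), fdir r ∂ν)
          = (q * ∫⁻ r : Set.Ioi (0:ℝ), fdir r ∂ν) * ENNReal.ofReal c from by ring] at hch
      exact (ENNReal.mul_le_mul_iff_left (ENNReal.ofReal_pos.mpr hcpos).ne'
        ENNReal.ofReal_ne_top).mp hch
    calc ∫⁻ x in A, F x
        = ∫⁻ u : Metric.sphere (0 : EuclideanSpace ℝ (Fin d)) 1,
            ∫⁻ r in B, Gt ((r : ℝ) • (u : EuclideanSpace ℝ (Fin d))) ∂ν ∂σm := by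
          rw [htrans1, hpolar1']
      _ ≤ ∫⁻ u : Metric.sphere (0 : EuclideanSpace ℝ (Fin d)) 1,
            q * ∫⁻ r : Set.Ioi (0:ℝ), Gt ((r : ℝ) • (u : EuclideanSpace ℝ (Fin d))) ∂ν ∂σm :=
          lintegral_mono fun u => hperdir u
      _ = q * ∫⁻ u : Metric.sphere (0 : EuclideanSpace ℝ (Fin d)) 1,
            ∫⁻ r : Set.Ioi (0:ℝ), Gt ((r : ℝ) • (u : EuclideanSpace ℝ (Fin d))) ∂ν ∂σm :=
          lintegral_const_mul' _ _ hq_ne_top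
      _ = q * ∫⁻ x, F x := by rw [htrans2, hpolar2]
  -- conclude
  rw [withDensity_apply _ hA]
  have hdiv : ∀ x, ENNReal.ofReal (Real.exp (-U x) / Z) = F x * (ENNReal.ofReal Z)⁻¹ := by
    intro x
    rw [ENNReal.ofReal_div_of_pos hZpos, div_eq_mul_inv]
  simp only [hdiv]
  rw [lintegral_mul_const' _ _ (ENNReal.inv_ne_top.mpr (ENNReal.ofReal_pos.mpr hZpos).ne')]
  rw [← div_eq_mul_inv, ENNReal.div_le_iff (ENNReal.ofReal_pos.mpr hZpos).ne'
    ENNReal.ofReal_ne_top, ← hIF]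
  exact key

end Main
end
end
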